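/- arXiv:2403.07841 — 6 statements merged into one kernel-verified Lean document; each statement's English description precedes it below -/
import Mathlib

section
/- Let F be a real inner product space of dimension m, W a real vector space, and A : F → W a quadratic map, i.e. A(λu) = λ²·A(u) for all λ ∈ ℝ and u ∈ F, and B(u,v) := (A(u+v) − A(u) − A(v))/2 is bilinear on F × F. Then for every d = (d_1,…,d_m) ∈ ℝ^m, the convex hull of the set { Σ_{k=1}^m d_k·A(u_k) : (u_1,…,u_m) an orthonormal basis of F } equals the set { Σ_{ℓ=1}^m d̃_ℓ·A(u_ℓ) : (u_1,…,u_m) an orthonormal basis of F and d̃ ∈ Mix(d) }. -/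
open scoped RealInnerProductSpace
open Finset

section Aux

variable {F : Type*} [NormedAddCommGroup F] [InnerProductSpace ℝ F] {m : ℕ}

/-- The symmetric operator `v ↦ ∑ j, δ j ⟪v, b j⟫ b j`. -/
noncomputable def mixGram (b : Fin m → F) (δ : Fin m → ℝ) : F →ₗ[ℝ] F where
  toFun v := ∑ j, (δ j * ⟪v, b j⟫) • b j
  map_add' u v := by
    simp [inner_add_left, mul_add, add_smul, Finset.sum_add_distrib]
  map_smul' c v := by
    simp only [real_inner_smul_left, RingHom.id_apply, Finset.smul_sum, smul_smul]
    refine Finset.sum_congr rfl fun j _ => ?_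
    ring_nf

lemma mixGram_apply (b : Fin m → F) (δ : Fin m → ℝ) (v : F) :
    mixGram b δ v = ∑ j, (δ j * ⟪v, b j⟫) • b j := rfl

lemma mixGram_isSymm (b : Fin m → F) (δ : Fin m → ℝ) :
    (mixGram b δ).IsSymmetric := by
  intro x y
  simp only [mixGram_apply, sum_inner, inner_sum, real_inner_smul_left, real_inner_smul_right]
  refine Finset.sum_congr rfl fun j _ => ?_
  rw [real_inner_comm y (b j)]
  ring

lemma mixGram_apply_onb (f : OrthonormalBasis (Fin m) ℝ F) (μ : Fin m → ℝ) (i : Fin m) :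
    mixGram (⇑f) μ (f i) = μ i • f i := by
  have h := orthonormal_iff_ite.mp f.orthonormal
  simp [mixGram_apply, h, mul_ite, ite_smul, Finset.sum_ite_eq]

end Aux

section Aux2

variable {F W : Type*} [NormedAddCommGroup F] [InnerProductSpace ℝ F]
  [AddCommGroup W] [Module ℝ W] {m : ℕ}

lemma expand_bilin (Bb : F →ₗ[ℝ] F →ₗ[ℝ] W) (f : OrthonormalBasis (Fin m) ℝ F) (u : F) :
    Bb u u = ∑ k, ∑ l, (⟪f k, u⟫ * ⟪f l, u⟫) • Bb (f k) (f l) := by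
  conv_lhs => rw [← f.sum_repr' u]
  simp_rw [map_sum, map_smul, LinearMap.sum_apply, LinearMap.smul_apply, Finset.smul_sum,
    smul_smul]
  rw [Finset.sum_comm]
  exact Finset.sum_congr rfl fun k _ => Finset.sum_congr rfl fun l _ => by rw [mul_comm]

/-- Key identity: the "trace pairing" of `mixGram b δ` against basis `f` recovers
`∑ δ j • Bb (b j) (b j)`. -/
lemma psi_gram (Bb : F →ₗ[ℝ] F →ₗ[ℝ] W) (f b : OrthonormalBasis (Fin m) ℝ F)
    (δ : Fin m → ℝ) :
    ∑ k, ∑ l, ⟪mixGram (⇑b) δ (f l), f k⟫ • Bb (f k) (f l)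
      = ∑ j, δ j • Bb (b j) (b j) := by
  have hin : ∀ k l : Fin m, ⟪mixGram (⇑b) δ (f l), f k⟫
      = ∑ j, (δ j * ⟪f l, b j⟫) * ⟪b j, f k⟫ := by
    intro k l
    simp [mixGram_apply, sum_inner, real_inner_smul_left]
  calc ∑ k, ∑ l, ⟪mixGram (⇑b) δ (f l), f k⟫ • Bb (f k) (f l)
      = ∑ k, ∑ l, ∑ j, ((δ j * ⟪f l, b j⟫) * ⟪b j, f k⟫) • Bb (f k) (f l) := by
        simp_rw [hin, Finset.sum_smul]
    _ = ∑ k, ∑ j, ∑ l, ((δ j * ⟪f l, b j⟫) * ⟪b j, f k⟫) • Bb (f k) (f l) := by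
        exact Finset.sum_congr rfl fun k _ => Finset.sum_comm
    _ = ∑ j, ∑ k, ∑ l, ((δ j * ⟪f l, b j⟫) * ⟪b j, f k⟫) • Bb (f k) (f l) := Finset.sum_comm
    _ = ∑ j, δ j • Bb (b j) (b j) := by
        refine Finset.sum_congr rfl fun j _ => ?_
        rw [expand_bilin Bb f (b j), Finset.smul_sum]
        refine Finset.sum_congr rfl fun k _ => ?_
        rw [Finset.smul_sum]
        refine Finset.sum_congr rfl fun l _ => ?_
        rw [smul_smul]
        congr 1
        rw [real_inner_comm (b j) (f k)]
        ring

end Aux2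

section Mix

variable {m : ℕ}

lemma permMatrix_mulVec (σ : Equiv.Perm (Fin m)) (v : Fin m → ℝ) :
    (σ.permMatrix ℝ).mulVec v = v ∘ σ := by
  funext i
  simp [Matrix.mulVec, dotProduct, Equiv.Perm.permMatrix, PEquiv.toMatrix_apply,
    Equiv.toPEquiv_apply]

lemma perm_mem_mix (d δ : Fin m → ℝ)
    (hδ : δ ∈ convexHull ℝ {e : Fin m → ℝ | ∃ σ : Equiv.Perm (Fin m), e = d ∘ σ})
    (σ : Equiv.Perm (Fin m)) :
    δ ∘ σ ∈ convexHull ℝ {e : Fin m → ℝ | ∃ σ : Equiv.Perm (Fin m), e = d ∘ σ} := by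
  set P : (Fin m → ℝ) →ₗ[ℝ] (Fin m → ℝ) := LinearMap.funLeft ℝ ℝ σ with hP
  have h1 : δ ∘ σ ∈ P '' (convexHull ℝ {e : Fin m → ℝ | ∃ σ : Equiv.Perm (Fin m), e = d ∘ σ}) :=
    ⟨δ, hδ, rfl⟩
  rw [P.image_convexHull] at h1
  refine convexHull_min ?_ (convex_convexHull _ _) h1
  rintro x ⟨e, ⟨τ, rfl⟩, rfl⟩
  refine subset_convexHull _ _ ⟨σ.trans τ, ?_⟩
  rfl

lemma ds_mulVec_mem_mix (d δ : Fin m → ℝ)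
    (hδ : δ ∈ convexHull ℝ {e : Fin m → ℝ | ∃ σ : Equiv.Perm (Fin m), e = d ∘ σ})
    (M : Matrix (Fin m) (Fin m) ℝ) (hM : M ∈ doublyStochastic ℝ (Fin m)) :
    M.mulVec δ ∈ convexHull ℝ {e : Fin m → ℝ | ∃ σ : Equiv.Perm (Fin m), e = d ∘ σ} := by
  set L : Matrix (Fin m) (Fin m) ℝ →ₗ[ℝ] (Fin m → ℝ) :=
    { toFun := fun N => N.mulVec δ
      map_add' := fun N₁ N₂ => Matrix.add_mulVec N₁ N₂ δ
      map_smul' := fun c N => Matrix.smul_mulVec c N δ } with hL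
  have h1 : M.mulVec δ ∈ L '' (doublyStochastic ℝ (Fin m)) := ⟨M, hM, rfl⟩
  rw [doublyStochastic_eq_convexHull_permMatrix, L.image_convexHull] at h1
  refine convexHull_min ?_ (convex_convexHull _ _) h1
  rintro x ⟨N, ⟨σ, rfl⟩, rfl⟩
  have : L (σ.permMatrix ℝ) = δ ∘ σ := permMatrix_mulVec σ δ
  rw [this]
  exact perm_mem_mix d δ hδ σ

end Mix

section Aux3

variable {F : Type*} [NormedAddCommGroup F] [InnerProductSpace ℝ F] {m : ℕ}

lemma onb_sq_doublyStochastic (b f : OrthonormalBasis (Fin m) ℝ F) :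
    (Matrix.of fun k j => ⟪b j, f k⟫ ^ 2) ∈ doublyStochastic ℝ (Fin m) := by
  rw [mem_doublyStochastic_iff_sum]
  refine ⟨fun i j => sq_nonneg _, fun k => ?_, fun j => ?_⟩
  · have h := b.sum_inner_mul_inner (f k) (f k)
    have hk : ⟪f k, f k⟫ = 1 := by
      rw [real_inner_self_eq_norm_sq, f.orthonormal.1 k]; norm_num
    calc ∑ j, (Matrix.of fun k j => ⟪b j, f k⟫ ^ 2) k j
        = ∑ j, ⟪f k, b j⟫ * ⟪b j, f k⟫ := by
          refine Finset.sum_congr rfl fun j _ => ?_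
          simp [sq, real_inner_comm (b j) (f k)]
      _ = 1 := by rw [h, hk]
  · have h := f.sum_inner_mul_inner (b j) (b j)
    have hj : ⟪b j, b j⟫ = 1 := by
      rw [real_inner_self_eq_norm_sq, b.orthonormal.1 j]; norm_num
    calc ∑ k, (Matrix.of fun k j => ⟪b j, f k⟫ ^ 2) k j
        = ∑ k, ⟪b j, f k⟫ * ⟪f k, b j⟫ := by
          refine Finset.sum_congr rfl fun k _ => ?_
          simp [sq, real_inner_comm (b j) (f k)]
      _ = 1 := by rw [h, hj]

lemma mixGram_diag (b f : OrthonormalBasis (Fin m) ℝ F) (δ : Fin m → ℝ) (k : Fin m) :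
    ⟪mixGram (⇑b) δ (f k), f k⟫
      = ((Matrix.of fun k j => ⟪b j, f k⟫ ^ 2).mulVec δ) k := by
  simp only [mixGram_apply, sum_inner, real_inner_smul_left, Matrix.mulVec, dotProduct,
    Matrix.of_apply]
  refine Finset.sum_congr rfl fun j _ => ?_
  rw [sq, real_inner_comm (b j) (f k)]
  ring

end Aux3


/-- **Mixing lemma.**
Let `F` be a real inner product space of dimension `m`, `W` a real vector space, and
`A : F → W` a quadratic map (i.e. `A (c • u) = c ^ 2 • A u` and the polarization
`B u v = (A (u+v) − A u − A v) / 2` is bilinear).  Then for every `d ∈ ℝ^m`, the convex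
hull of `{ ∑ k, d k • A (u k) : (u k) an orthonormal basis of F }` equals
`{ ∑ ℓ, d' ℓ • A (u ℓ) : (u ℓ) an orthonormal basis of F, d' ∈ Mix d }`, where `Mix d` is
the convex hull of the permutations of `d`. -/
theorem mixing_lemma
    {F W : Type*} [NormedAddCommGroup F] [InnerProductSpace ℝ F] [FiniteDimensional ℝ F]
    [AddCommGroup W] [Module ℝ W]
    {m : ℕ} (hm : Module.finrank ℝ F = m)
    (A : F → W)
    (hA_homog : ∀ (c : ℝ) (u : F), A (c • u) = (c ^ 2) • A u)
    (hA_bilin : ∃ B : F →ₗ[ℝ] F →ₗ[ℝ] W,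
        ∀ u v : F, B u v = (2 : ℝ)⁻¹ • (A (u + v) - A u - A v))
    (d : Fin m → ℝ) :
    convexHull ℝ {w : W | ∃ b : OrthonormalBasis (Fin m) ℝ F, w = ∑ k, d k • A (b k)}
      = {w : W | ∃ b : OrthonormalBasis (Fin m) ℝ F,
          ∃ d' ∈ convexHull ℝ {e : Fin m → ℝ | ∃ σ : Equiv.Perm (Fin m), e = d ∘ σ},
          w = ∑ k, d' k • A (b k)} := by
  obtain ⟨Bb, hB⟩ := hA_bilin
  have hBA : ∀ u : F, Bb u u = A u := by
    intro u
    rw [hB u u]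
    have h2 : u + u = (2 : ℝ) • u := by rw [two_smul]
    rw [h2, hA_homog]
    module
  have hd : d ∈ convexHull ℝ {e : Fin m → ℝ | ∃ σ : Equiv.Perm (Fin m), e = d ∘ σ} :=
    subset_convexHull _ _ ⟨1, by funext k; simp⟩
  apply Set.Subset.antisymm
  · refine convexHull_min ?_ ?_
    · rintro w ⟨b, rfl⟩
      exact ⟨b, d, hd, rfl⟩
    · rintro x ⟨b, db, hdb, rfl⟩ y ⟨c, dc, hdc, rfl⟩ s t hs ht hst
      set Z : F →ₗ[ℝ] F := s • mixGram (⇑b) db + t • mixGram (⇑c) dc with hZ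
      have hZsym : Z.IsSymmetric := by
        intro u v
        simp only [hZ, LinearMap.add_apply, LinearMap.smul_apply, inner_add_left, inner_add_right,
          real_inner_smul_left, real_inner_smul_right]
        rw [mixGram_isSymm (⇑b) db u v, mixGram_isSymm (⇑c) dc u v]
      set f := hZsym.eigenvectorBasis hm with hf
      set μ := hZsym.eigenvalues hm with hμdef
      have hZf : ∀ i, Z (f i) = μ i • f i := fun i => by
        simpa only [RCLike.ofReal_real_eq_id, id] using hZsym.apply_eigenvectorBasis hm i
      have hZgram : Z = mixGram (⇑f) μ := by
        refine f.toBasis.ext fun i => ?_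
        rw [OrthonormalBasis.coe_toBasis, hZf i, mixGram_apply_onb]
      have e4 : ∑ k, ∑ l, ⟪Z (f l), f k⟫ • Bb (f k) (f l)
          = s • (∑ k, ∑ l, ⟪mixGram (⇑b) db (f l), f k⟫ • Bb (f k) (f l))
            + t • (∑ k, ∑ l, ⟪mixGram (⇑c) dc (f l), f k⟫ • Bb (f k) (f l)) := by
        simp only [hZ, LinearMap.add_apply, LinearMap.smul_apply, inner_add_left,
          real_inner_smul_left, add_smul, mul_smul, Finset.sum_add_distrib, Finset.smul_sum]
      rw [hZgram, psi_gram Bb f f μ, psi_gram Bb f b db, psi_gram Bb f c dc] at e4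
      simp_rw [hBA] at e4
      have hfone : ∀ k, ⟪f k, f k⟫ = (1 : ℝ) := by
        intro k
        rw [real_inner_self_eq_norm_sq, f.orthonormal.1 k]; norm_num
      have hμeq : μ = s • ((Matrix.of fun k j => ⟪b j, f k⟫ ^ 2).mulVec db)
          + t • ((Matrix.of fun k j => ⟪c j, f k⟫ ^ 2).mulVec dc) := by
        funext k
        have h1 : ⟪Z (f k), f k⟫ = μ k := by
          rw [hZf k, real_inner_smul_left, hfone k, mul_one]
        have h2 : ⟪Z (f k), f k⟫
            = s * ⟪mixGram (⇑b) db (f k), f k⟫ + t * ⟪mixGram (⇑c) dc (f k), f k⟫ := by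
          simp [hZ, LinearMap.add_apply, LinearMap.smul_apply, inner_add_left,
            real_inner_smul_left]
        rw [mixGram_diag b f db k, mixGram_diag c f dc k] at h2
        rw [← h1, h2]
        rfl
      have hμmem : μ ∈ convexHull ℝ {e : Fin m → ℝ | ∃ σ : Equiv.Perm (Fin m), e = d ∘ σ} := by
        rw [hμeq]
        exact (convex_convexHull ℝ _)
          (ds_mulVec_mem_mix d db hdb _ (onb_sq_doublyStochastic b f))
          (ds_mulVec_mem_mix d dc hdc _ (onb_sq_doublyStochastic c f)) hs ht hst
      exact ⟨f, μ, hμmem, e4.symm⟩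
  · rintro w ⟨b, d', hd', rfl⟩
    set L : (Fin m → ℝ) →ₗ[ℝ] W := ∑ k, (LinearMap.proj k).smulRight (A (b k)) with hLdef
    have hLa : ∀ δ : Fin m → ℝ, L δ = ∑ k, δ k • A (b k) := fun δ => by
      simp [hLdef, LinearMap.sum_apply, LinearMap.smulRight_apply, LinearMap.proj_apply]
    have h2 : L d' ∈ L '' (convexHull ℝ {e : Fin m → ℝ | ∃ σ : Equiv.Perm (Fin m), e = d ∘ σ}) :=
      ⟨d', hd', rfl⟩
    rw [L.image_convexHull] at h2
    have h3 : L '' {e : Fin m → ℝ | ∃ σ : Equiv.Perm (Fin m), e = d ∘ σ}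
        ⊆ {w : W | ∃ b : OrthonormalBasis (Fin m) ℝ F, w = ∑ k, d k • A (b k)} := by
      rintro x ⟨e, ⟨σ, rfl⟩, rfl⟩
      refine ⟨b.reindex σ, ?_⟩
      rw [hLa]
      simp_rw [OrthonormalBasis.reindex_apply, Function.comp_apply]
      have h5 := Equiv.sum_comp σ (fun j => d j • A (b (σ.symm j)))
      simp only [Equiv.symm_apply_apply] at h5
      exact h5
    have := convexHull_mono h3 h2
    rwa [hLa] at this
end

section
/- Let λ_1,…,λ_N : Ω → ℝ be locally Lipschitz, F : ℝ^N → ℝ continuously differentiable, 𝔉 := F∘(λ_1,…,λ_N), and for x ∈ Ω set d_k(x) := ∂_kF(λ_1(x),…,λ_N(x)). (i) If each λ_k admits a right directional derivative at x in a given direction h ∈ X, then so does 𝔉 and 𝔉_r'(x;h) = Σ_{k=1}^N d_k(x)·(λ_k)_r'(x;h). (ii) If each λ_k admits right directional derivatives at x in every direction, then ∂^±𝔉(x) ⊇ Σ_{k : d_k(x)>0} d_k(x)·∂^±λ_k(x) + Σ_{k : d_k(x)<0} d_k(x)·∂^∓λ_k(x) (Minkowski sums of scaled sets), for both choices of sign.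 -/
open Filter Topology Set Pointwise

private lemma sum_split_aux {N : ℕ} (d : Fin N → ℝ) (v : Fin N → ℝ) :
    ∑ k, d k * v k =
      (∑ k ∈ Finset.univ.filter fun k => 0 < d k, d k * v k) +
        ∑ k ∈ Finset.univ.filter fun k => d k < 0, d k * v k := by
  classical
  rw [← Finset.sum_filter_add_sum_filter_not Finset.univ (fun k => 0 < d k)
      (fun k => d k * v k)]
  congr 1
  refine (Finset.sum_subset (fun k hk => ?_) (fun k hk hk2 => ?_)).symm
  · simp only [Finset.mem_filter, Finset.mem_univ, true_and] at hk ⊢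
    exact not_lt.mpr hk.le
  · simp only [Finset.mem_filter, Finset.mem_univ, true_and, not_lt] at hk hk2
    have : d k = 0 := le_antisymm hk hk2
    simp [this]

/-- **chain rule for right directional derivatives and classical
sub/superdifferentials.**
Let `λ_1,…,λ_N : Ω → ℝ` be locally Lipschitz, `F ∈ C¹(ℝ^N)`, `𝔉 := F ∘ (λ_1,…,λ_N)` and
`d_k(x) := ∂_k F(λ_1(x),…,λ_N(x))`.
(i) If each `λ_k` has a right directional derivative `Dk k` at `x` in a direction `h`,
then so does `𝔉`, with value `∑ k, d k * Dk k`.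
(ii) If each `λ_k` has right directional derivatives `D k h` at `x` in every direction,
then `∂^±𝔉(x) ⊇ ∑_{k : d_k>0} d_k • ∂^±λ_k(x) + ∑_{k : d_k<0} d_k • ∂^∓λ_k(x)`
(Minkowski sums of scaled sets), for both choices of sign. -/
theorem chain_rule_right_deriv_and_classical_subdiff
    {X : Type*} [NormedAddCommGroup X] [NormedSpace ℝ X] [CompleteSpace X]
    {Ω : Set X} (hΩ : IsOpen Ω) {N : ℕ}
    (lam : Fin N → X → ℝ)
    (hlip : ∀ k, ∀ z ∈ Ω, ∃ K : NNReal, ∃ s ∈ 𝓝 z, LipschitzOnWith K (lam k) s)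
    (F : (Fin N → ℝ) → ℝ) (hF : ContDiff ℝ 1 F)
    (x : X) (hx : x ∈ Ω)
    (d : Fin N → ℝ)
    (hd : ∀ k, d k = fderiv ℝ F (fun j => lam j x) (Pi.single k 1)) :
    (∀ (h : X) (Dk : Fin N → ℝ),
      (∀ k, Tendsto (fun t : ℝ => (lam k (x + t • h) - lam k x) / t)
        (𝓝[>] (0:ℝ)) (𝓝 (Dk k))) →
      Tendsto (fun t : ℝ =>
          (F (fun j => lam j (x + t • h)) - F (fun j => lam j x)) / t)
        (𝓝[>] (0:ℝ)) (𝓝 (∑ k, d k * Dk k))) ∧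
    (∀ D : Fin N → X → ℝ,
      (∀ k (h : X), Tendsto (fun t : ℝ => (lam k (x + t • h) - lam k x) / t)
        (𝓝[>] (0:ℝ)) (𝓝 (D k h))) →
      (((∑ k ∈ Finset.univ.filter fun k => 0 < d k,
            d k • {ζ : X →L[ℝ] ℝ | ∀ h : X, ζ h ≤ D k h}) +
          ∑ k ∈ Finset.univ.filter fun k => d k < 0,
            d k • {ζ : X →L[ℝ] ℝ | ∀ h : X, D k h ≤ ζ h})
          ⊆ {ζ : X →L[ℝ] ℝ | ∀ h : X, ζ h ≤ ∑ k, d k * D k h}) ∧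
      (((∑ k ∈ Finset.univ.filter fun k => 0 < d k,
            d k • {ζ : X →L[ℝ] ℝ | ∀ h : X, D k h ≤ ζ h}) +
          ∑ k ∈ Finset.univ.filter fun k => d k < 0,
            d k • {ζ : X →L[ℝ] ℝ | ∀ h : X, ζ h ≤ D k h})
          ⊆ {ζ : X →L[ℝ] ℝ | ∀ h : X, ∑ k, d k * D k h ≤ ζ h})) := by
  classical
  set y₀ : Fin N → ℝ := fun j => lam j x with hy₀
  set A : (Fin N → ℝ) →L[ℝ] ℝ := fderiv ℝ F y₀ with hA
  have hdiff : HasFDerivAt F A y₀ := (hF.differentiable one_ne_zero y₀).hasFDerivAt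
  constructor
  · -- part (i)
    intro h Dk hDk
    set g : ℝ → Fin N → ℝ := fun t j => lam j (x + t • h) with hg
    have ht0 : Tendsto (fun t : ℝ => t) (𝓝[>] (0:ℝ)) (𝓝 0) :=
      tendsto_id.mono_left nhdsWithin_le_nhds
    -- the vector difference quotient converges to Dk
    have hq : Tendsto (fun t => t⁻¹ • (g t - y₀)) (𝓝[>] (0:ℝ)) (𝓝 Dk) := by
      rw [tendsto_pi_nhds]
      intro k
      have := hDk k
      refine this.congr fun t => ?_
      simp [g, y₀, div_eq_inv_mul]
    -- so g t → y₀
    have heq : (fun t => g t - y₀) =ᶠ[𝓝[>] (0:ℝ)]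
        fun t => t • (t⁻¹ • (g t - y₀)) := by
      filter_upwards [self_mem_nhdsWithin] with t ht
      rw [smul_smul, mul_inv_cancel₀ (ne_of_gt ht), one_smul]
    have hgt : Tendsto g (𝓝[>] (0:ℝ)) (𝓝 y₀) := by
      rw [← tendsto_sub_nhds_zero_iff]
      have : Tendsto (fun t : ℝ => t • (t⁻¹ • (g t - y₀))) (𝓝[>] (0:ℝ))
          (𝓝 ((0:ℝ) • Dk)) := ht0.smul hq
      rw [zero_smul] at this
      exact this.congr' heq.symm
    -- g t - y₀ = O(t)
    have hO : (fun t => g t - y₀) =O[𝓝[>] (0:ℝ)] fun t : ℝ => t := by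
      rw [Asymptotics.isBigO_iff]
      refine ⟨‖Dk‖ + 1, ?_⟩
      have h1 : ∀ᶠ t in 𝓝[>] (0:ℝ), ‖t⁻¹ • (g t - y₀)‖ < ‖Dk‖ + 1 :=
        hq.norm.eventually_lt_const (lt_add_one _)
      filter_upwards [h1, heq, self_mem_nhdsWithin] with t h1 heq ht
      rw [heq, norm_smul, mul_comm]
      exact mul_le_mul h1.le le_rfl (norm_nonneg _) (by positivity)
    -- little-o term
    have hlo : (fun t => F (g t) - F y₀ - A (g t - y₀)) =o[𝓝[>] (0:ℝ)]
        fun t : ℝ => t :=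
      (hdiff.isLittleO.comp_tendsto hgt).trans_isBigO hO
    have hzero : Tendsto (fun t => (F (g t) - F y₀ - A (g t - y₀)) / t)
        (𝓝[>] (0:ℝ)) (𝓝 0) := hlo.tendsto_div_nhds_zero
    have hlin : Tendsto (fun t => A (g t - y₀) / t) (𝓝[>] (0:ℝ)) (𝓝 (A Dk)) := by
      have := (A.continuous.tendsto Dk).comp hq
      refine this.congr fun t => ?_
      simp [map_smul, smul_eq_mul, div_eq_inv_mul]
    have key : A Dk = ∑ k, d k * Dk k := by
      have := LinearMap.pi_apply_eq_sum_univ (A.toLinearMap) Dk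
      simp only [ContinuousLinearMap.coe_coe] at this
      rw [this]
      refine Finset.sum_congr rfl fun k _ => ?_
      rw [hd k, smul_eq_mul, mul_comm]
      congr 2
      ext j
      simp [Pi.single_apply, eq_comm]
    have final : Tendsto (fun t => (F (g t) - F y₀) / t) (𝓝[>] (0:ℝ))
        (𝓝 (0 + A Dk)) := by
      refine Tendsto.congr (fun t => ?_) (hzero.add hlin)
      rw [← add_div, sub_add_cancel]
    rw [zero_add, key] at final
    exact final
  · -- part (ii)
    intro D hD
    constructor
    · rintro ζ hζ
      obtain ⟨a, ha, b, hb, rfl⟩ := Set.mem_add.mp hζ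
      rw [Set.mem_finset_sum] at ha hb
      obtain ⟨ga, hga, rfl⟩ := ha
      obtain ⟨gb, hgb, rfl⟩ := hb
      intro h
      rw [sum_split_aux d (fun k => D k h)]
      simp only [ContinuousLinearMap.add_apply, ContinuousLinearMap.sum_apply]
      refine add_le_add (Finset.sum_le_sum fun k hk => ?_)
        (Finset.sum_le_sum fun k hk => ?_)
      · obtain ⟨w, hw, hwe⟩ := Set.mem_smul_set.mp (hga hk)
        simp only [Finset.mem_filter, Finset.mem_univ, true_and] at hk
        rw [← hwe]
        simp only [ContinuousLinearMap.coe_smul', Pi.smul_apply, smul_eq_mul]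
        exact mul_le_mul_of_nonneg_left (hw h) hk.le
      · obtain ⟨w, hw, hwe⟩ := Set.mem_smul_set.mp (hgb hk)
        simp only [Finset.mem_filter, Finset.mem_univ, true_and] at hk
        rw [← hwe]
        simp only [ContinuousLinearMap.coe_smul', Pi.smul_apply, smul_eq_mul]
        exact mul_le_mul_of_nonpos_left (hw h) hk.le
    · rintro ζ hζ
      obtain ⟨a, ha, b, hb, rfl⟩ := Set.mem_add.mp hζ
      rw [Set.mem_finset_sum] at ha hb
      obtain ⟨ga, hga, rfl⟩ := ha
      obtain ⟨gb, hgb, rfl⟩ := hb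
      intro h
      rw [sum_split_aux d (fun k => D k h)]
      simp only [ContinuousLinearMap.add_apply, ContinuousLinearMap.sum_apply]
      refine add_le_add (Finset.sum_le_sum fun k hk => ?_)
        (Finset.sum_le_sum fun k hk => ?_)
      · obtain ⟨w, hw, hwe⟩ := Set.mem_smul_set.mp (hga hk)
        simp only [Finset.mem_filter, Finset.mem_univ, true_and] at hk
        rw [← hwe]
        simp only [ContinuousLinearMap.coe_smul', Pi.smul_apply, smul_eq_mul]
        exact mul_le_mul_of_nonneg_left (hw h) hk.le
      · obtain ⟨w, hw, hwe⟩ := Set.mem_smul_set.mp (hgb hk)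
        simp only [Finset.mem_filter, Finset.mem_univ, true_and] at hk
        rw [← hwe]
        simp only [ContinuousLinearMap.coe_smul', Pi.smul_apply, smul_eq_mul]
        exact mul_le_mul_of_nonpos_left (hw h) hk.le
end

section
/- Let λ_1,…,λ_N : Ω → ℝ be locally Lipschitz, F : ℝ^N → ℝ continuously differentiable, 𝔉 := F∘(λ_1,…,λ_N), and for x ∈ Ω set d_k(x) := ∂_kF(λ_1(x),…,λ_N(x)). Then for every h ∈ X, 𝔉_+^∘(x;h) ≤ Σ_{k : d_k(x)>0} d_k(x)·(λ_k)_+^∘(x;h) + Σ_{k : d_k(x)<0} d_k(x)·(λ_k)_−^∘(x;h), and ∂_C^±𝔉(x) ⊆ Σ_{k : d_k(x)>0} d_k(x)·∂_C^±λ_k(x) + Σ_{k : d_k(x)<0} d_k(x)·∂_C^∓λ_k(x) (Minkowski sums of scaled sets), for both choices of sign. -/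
open Filter Topology Set Pointwise

variable {X : Type*} [NormedAddCommGroup X] [NormedSpace ℝ X]

/-- Clarke's generalized upper directional derivative
`𝔉_+^∘(x;h) = limsup_{y→x, t↓0} (𝔉(y+th) − 𝔉(y))/t`. -/
noncomputable def clarkeUpper (F : X → ℝ) (x h : X) : ℝ :=
  Filter.limsup (fun p : X × ℝ => (F (p.1 + p.2 • h) - F p.1) / p.2)
    ((𝓝 x) ×ˢ (𝓝[>] (0:ℝ)))

/-- Clarke's generalized lower directional derivative
`𝔉_−^∘(x;h) = liminf_{y→x, t↓0} (𝔉(y+th) − 𝔉(y))/t`. -/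
noncomputable def clarkeLower (F : X → ℝ) (x h : X) : ℝ :=
  Filter.liminf (fun p : X × ℝ => (F (p.1 + p.2 • h) - F p.1) / p.2)
    ((𝓝 x) ×ˢ (𝓝[>] (0:ℝ)))

/-- Clarke subdifferential `∂_C^−𝔉(x) = {ζ ∈ X* : ⟨ζ,h⟩ ≤ 𝔉_+^∘(x;h) ∀h}`. -/
def clarkeSubdiff (F : X → ℝ) (x : X) : Set (X →L[ℝ] ℝ) :=
  {ζ | ∀ h : X, ζ h ≤ clarkeUpper F x h}

/-- Clarke superdifferential `∂_C^+𝔉(x) = {ζ ∈ X* : ⟨ζ,h⟩ ≥ 𝔉_−^∘(x;h) ∀h}`. -/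
def clarkeSuperdiff (F : X → ℝ) (x : X) : Set (X →L[ℝ] ℝ) :=
  {ζ | ∀ h : X, clarkeLower F x h ≤ ζ h}

namespace ClarkeAux

set_option linter.unusedSectionVars false

/-! ### Generic real limsup helpers -/

lemma bdd_le {ι : Type*} {f : Filter ι} {u : ι → ℝ} {C : ℝ} (hC : ∀ᶠ p in f, |u p| ≤ C) :
    IsBoundedUnder (· ≤ ·) f u := ⟨C, hC.mono fun _ hp => (abs_le.1 hp).2⟩

lemma bdd_ge {ι : Type*} {f : Filter ι} {u : ι → ℝ} {C : ℝ} (hC : ∀ᶠ p in f, |u p| ≤ C) :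
    IsBoundedUnder (· ≥ ·) f u := ⟨-C, hC.mono fun _ hp => (abs_le.1 hp).1⟩

lemma cobdd_le {ι : Type*} {f : Filter ι} [f.NeBot] {u : ι → ℝ} {C : ℝ}
    (hC : ∀ᶠ p in f, |u p| ≤ C) : IsCoboundedUnder (· ≤ ·) f u :=
  (bdd_ge hC).isCoboundedUnder_le

lemma cobdd_ge {ι : Type*} {f : Filter ι} [f.NeBot] {u : ι → ℝ} {C : ℝ}
    (hC : ∀ᶠ p in f, |u p| ≤ C) : IsCoboundedUnder (· ≥ ·) f u :=
  (bdd_le hC).isCoboundedUnder_ge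

lemma limsup_sum_le {ι : Type*} {f : Filter ι} [f.NeBot] {κ : Type*} (s : Finset κ)
    (u : κ → ι → ℝ) (h : ∀ k ∈ s, ∃ C, ∀ᶠ p in f, |u k p| ≤ C) :
    limsup (fun p => ∑ k ∈ s, u k p) f ≤ ∑ k ∈ s, limsup (u k) f := by
  classical
  revert h
  induction s using Finset.induction_on with
  | empty => intro _; simp [limsup_const]
  | @insert a s' ha ih =>
      intro h
      obtain ⟨Ca, hCa⟩ := h a (Finset.mem_insert_self a s')
      choose! C hC using fun k hk => h k (Finset.mem_insert_of_mem hk)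
      have hall : ∀ᶠ p in f, ∀ k ∈ s', |u k p| ≤ C k :=
        (Filter.eventually_all_finset s').2 hC
      have hsum_bdd : ∀ᶠ p in f, |∑ k ∈ s', u k p| ≤ ∑ k ∈ s', C k :=
        hall.mono fun p hp =>
          (Finset.abs_sum_le_sum_abs _ _).trans (Finset.sum_le_sum hp)
      simp only [Finset.sum_insert ha]
      calc limsup (fun p => u a p + ∑ k ∈ s', u k p) f
          ≤ limsup (u a) f + limsup (fun p => ∑ k ∈ s', u k p) f :=
            limsup_add_le (bdd_ge hCa) (bdd_le hCa) (cobdd_le hsum_bdd) (bdd_le hsum_bdd)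
        _ ≤ limsup (u a) f + ∑ k ∈ s', limsup (u k) f :=
            add_le_add_right (ih fun k hk => ⟨C k, hC k hk⟩) _

lemma limsup_const_mul_pos {ι : Type*} {f : Filter ι} [f.NeBot] {u : ι → ℝ} {C c : ℝ}
    (hC : ∀ᶠ p in f, |u p| ≤ C) (hc : 0 < c) :
    limsup (fun p => c * u p) f = c * limsup u f := by
  have hm : Monotone fun z : ℝ => c * z := fun a b hab => mul_le_mul_of_nonneg_left hab hc.le
  have := hm.map_limsup_of_continuousAt u
      ((continuous_const.mul continuous_id).continuousAt) (bdd_le hC) (cobdd_le hC)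
  simpa [Function.comp_def] using this.symm

lemma limsup_const_mul_neg {ι : Type*} {f : Filter ι} [f.NeBot] {u : ι → ℝ} {C c : ℝ}
    (hC : ∀ᶠ p in f, |u p| ≤ C) (hc : c < 0) :
    limsup (fun p => c * u p) f = c * liminf u f := by
  have hm : Antitone fun z : ℝ => c * z := fun a b hab => mul_le_mul_of_nonpos_left hab hc.le
  have := hm.map_liminf_of_continuousAt u
      ((continuous_const.mul continuous_id).continuousAt) (cobdd_ge hC) (bdd_ge hC)
  simpa [Function.comp_def] using this.symm

/-! ### Lipschitz quotient bounds -/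

lemma eventually_mem {x : X} {s : Set X} (hs : s ∈ 𝓝 x) (h : X) :
    ∀ᶠ p : X × ℝ in (𝓝 x) ×ˢ (𝓝[>] (0:ℝ)),
      p.1 ∈ s ∧ p.1 + p.2 • h ∈ s ∧ 0 < p.2 := by
  obtain ⟨ε, εpos, hball⟩ := Metric.mem_nhds_iff.1 hs
  set δ : ℝ := (ε/2) / (‖h‖ + 1) with hδ
  have hδpos : 0 < δ := by positivity
  have hmem : (Metric.ball x (ε/2)) ×ˢ (Set.Ioo (0:ℝ) δ) ∈ (𝓝 x) ×ˢ (𝓝[>] (0:ℝ)) :=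
    Filter.prod_mem_prod (Metric.ball_mem_nhds x (by positivity))
      (Ioo_mem_nhdsGT_of_mem ⟨le_refl 0, hδpos⟩)
  filter_upwards [hmem] with p hp
  obtain ⟨hy, ht⟩ := hp
  have hy' : dist p.1 x < ε/2 := hy
  refine ⟨hball (Metric.ball_subset_ball (by linarith) hy), hball ?_, ht.1⟩
  have htri : dist (p.1 + p.2 • h) x ≤ dist (p.1 + p.2 • h) p.1 + dist p.1 x :=
    dist_triangle _ _ _
  have h1 : dist (p.1 + p.2 • h) p.1 = p.2 * ‖h‖ := by
    rw [dist_eq_norm]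
    simp [norm_smul, abs_of_pos ht.1]
  have h2 : p.2 * ‖h‖ < ε/2 := by
    have ha : p.2 * ‖h‖ ≤ p.2 * (‖h‖ + 1) := by nlinarith [ht.1.le]
    have hb : p.2 * (‖h‖ + 1) < δ * (‖h‖ + 1) := by nlinarith [ht.2, norm_nonneg h]
    have hcden : δ * (‖h‖ + 1) = ε/2 := by
      rw [hδ]; field_simp
    linarith
  rw [Metric.mem_ball]
  rw [h1] at htri
  linarith

lemma quot_bound {x : X} {g : X → ℝ} {K : NNReal} {s : Set X}
    (hs : s ∈ 𝓝 x) (hg : LipschitzOnWith K g s) (h : X) :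
    ∀ᶠ p : X × ℝ in (𝓝 x) ×ˢ (𝓝[>] (0:ℝ)),
      |(g (p.1 + p.2 • h) - g p.1) / p.2| ≤ (K : ℝ) * ‖h‖ := by
  filter_upwards [eventually_mem hs h] with p hp
  obtain ⟨h1, h2, ht⟩ := hp
  have hlip := (lipschitzOnWith_iff_dist_le_mul.1 hg) _ h2 _ h1
  rw [Real.dist_eq] at hlip
  have hd : dist (p.1 + p.2 • h) p.1 = p.2 * ‖h‖ := by
    rw [dist_eq_norm]; simp [norm_smul, abs_of_pos ht]
  rw [hd] at hlip
  rw [abs_div, abs_of_pos ht, div_le_iff₀ ht]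
  calc |g (p.1 + p.2 • h) - g p.1| ≤ K * (p.2 * ‖h‖) := hlip
    _ = (K : ℝ) * ‖h‖ * p.2 := by ring

lemma lip_const_mul {Y : Type*} [PseudoMetricSpace Y] {K : NNReal} {g : Y → ℝ} {s : Set Y}
    (hg : LipschitzOnWith K g s) (c : ℝ) :
    LipschitzOnWith (Real.nnabs c * K) (fun y => c * g y) s := by
  rw [lipschitzOnWith_iff_dist_le_mul] at hg ⊢
  intro y hy z hz
  rw [Real.dist_eq]
  have he : c * g y - c * g z = c * (g y - g z) := by ring
  rw [he, abs_mul]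
  have h1 : |g y - g z| ≤ K * dist y z := by
    rw [← Real.dist_eq]; exact hg y hy z hz
  calc |c| * |g y - g z| ≤ |c| * (K * dist y z) :=
        mul_le_mul_of_nonneg_left h1 (abs_nonneg c)
    _ = ((Real.nnabs c * K : NNReal) : ℝ) * dist y z := by
        push_cast [Real.coe_nnabs]; ring

instance neBotL (x : X) : ((𝓝 x) ×ˢ (𝓝[>] (0:ℝ))).NeBot :=
  Filter.prod_neBot.2 ⟨inferInstance, inferInstance⟩

/-! ### Sublinearity of the Clarke upper derivative -/

lemma map_L (c : ℝ) (hc : 0 < c) (x : X) :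
    Filter.map (fun p : X × ℝ => (p.1, c * p.2)) ((𝓝 x) ×ˢ (𝓝[>] (0:ℝ)))
      = (𝓝 x) ×ˢ (𝓝[>] (0:ℝ)) := by
  have h1 : Filter.map (fun t : ℝ => c * t) (𝓝[>] (0:ℝ)) = 𝓝[>] (0:ℝ) := by
    have := (Homeomorph.mulLeft₀ c hc.ne').isEmbedding.map_nhdsWithin_eq (Set.Ioi 0) (0 : ℝ)
    have himg : (fun t : ℝ => c * t) '' Set.Ioi 0 = Set.Ioi 0 := by
      ext z
      constructor
      · rintro ⟨w, hw, rfl⟩; exact mul_pos hc hw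
      · intro hz; exact ⟨z / c, div_pos hz hc, by field_simp⟩
    simpa [himg, Homeomorph.coe_mulLeft₀, mul_zero] using this
  have : (fun p : X × ℝ => (p.1, c * p.2)) = Prod.map id (fun t : ℝ => c * t) := rfl
  rw [this, ← Filter.prod_map_map_eq', Filter.map_id, h1]

lemma clarkeUpper_smul_pos {x : X} {g : X → ℝ} {K : NNReal} {s : Set X}
    (hs : s ∈ 𝓝 x) (hg : LipschitzOnWith K g s) {c : ℝ} (hc : 0 < c) (h : X) :
    clarkeUpper g x (c • h) = c * clarkeUpper g x h := by
  have hb := quot_bound hs hg h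
  have key : (fun p : X × ℝ => (g (p.1 + p.2 • (c • h)) - g p.1) / p.2)
      = (fun p : X × ℝ => c * ((g (p.1 + p.2 • h) - g p.1) / p.2))
          ∘ (fun p : X × ℝ => (p.1, c * p.2)) := by
    funext p
    simp only [Function.comp]
    rcases eq_or_ne p.2 0 with h0 | h0
    · simp [h0]
    · have hsm : p.2 • (c • h) = (c * p.2) • h := by rw [smul_smul, mul_comm]
      rw [hsm]
      field_simp
  rw [clarkeUpper, key, clarkeUpper]
  have hmap : limsup ((fun p : X × ℝ => c * ((g (p.1 + p.2 • h) - g p.1) / p.2))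
        ∘ (fun p : X × ℝ => (p.1, c * p.2))) ((𝓝 x) ×ˢ (𝓝[>] (0:ℝ)))
      = limsup (fun p : X × ℝ => c * ((g (p.1 + p.2 • h) - g p.1) / p.2))
        ((𝓝 x) ×ˢ (𝓝[>] (0:ℝ))) := by
    rw [Filter.limsup, Filter.limsup, ← Filter.map_map, map_L c hc x]
  rw [hmap, limsup_const_mul_pos hb hc]

lemma clarkeUpper_add_le {x : X} {g : X → ℝ} {K : NNReal} {s : Set X}
    (hs : s ∈ 𝓝 x) (hg : LipschitzOnWith K g s) (h₁ h₂ : X) :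
    clarkeUpper g x (h₁ + h₂) ≤ clarkeUpper g x h₁ + clarkeUpper g x h₂ := by
  set L := (𝓝 x) ×ˢ (𝓝[>] (0:ℝ)) with hL
  set A := fun p : X × ℝ => (g (p.1 + p.2 • h₁) - g p.1) / p.2 with hA
  set B := fun p : X × ℝ => (g (p.1 + p.2 • h₂) - g p.1) / p.2 with hB
  set φ := fun p : X × ℝ => (p.1 + p.2 • h₂, p.2) with hφdef
  have hφ : Tendsto φ L L := by
    apply Filter.Tendsto.prodMk
    · have h2 : Tendsto (fun p : X × ℝ => p.2 • h₂) L (𝓝 (0 : X)) := by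
        have hsnd : Tendsto (fun p : X × ℝ => p.2) L (𝓝 (0:ℝ)) :=
          tendsto_snd.mono_right nhdsWithin_le_nhds
        simpa using hsnd.smul_const h₂
      have := tendsto_fst.add h2
      simpa using this
    · exact tendsto_snd
  have hbA := quot_bound hs hg h₁
  have hbB := quot_bound hs hg h₂
  have hAφ : ∀ᶠ p in L, |A (φ p)| ≤ (K : ℝ) * ‖h₁‖ := hφ.eventually hbA
  have key : (fun p : X × ℝ => (g (p.1 + p.2 • (h₁ + h₂)) - g p.1) / p.2)
      = fun p => A (φ p) + B p := by
    funext p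
    simp only [hA, hB, hφdef]
    rw [← add_div]
    congr 1
    have he : p.1 + p.2 • (h₁ + h₂) = p.1 + p.2 • h₂ + p.2 • h₁ := by
      rw [smul_add]; abel
    rw [he]; ring
  rw [clarkeUpper, clarkeUpper, clarkeUpper, ← hL, key]
  calc limsup (fun p => A (φ p) + B p) L
      ≤ limsup (fun p => A (φ p)) L + limsup B L :=
        limsup_add_le (bdd_ge hAφ) (bdd_le hAφ) (cobdd_le hbB) (bdd_le hbB)
    _ ≤ limsup A L + limsup B L := by
        refine add_le_add_left ?_ _
        have hmm : limsup (fun p => A (φ p)) L = limsup A (Filter.map φ L) := by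
          rw [Filter.limsup, Filter.limsup, Filter.map_map]; rfl
        rw [hmm]
        refine limsup_le_limsup_of_le hφ ?_ (bdd_le hbA)
        have hcb : IsCoboundedUnder (· ≤ ·) L (fun p => A (φ p)) := cobdd_le hAφ
        rw [Filter.IsCoboundedUnder, Filter.map_map]
        exact hcb

lemma clarkeUpper_le_bound {x : X} {g : X → ℝ} {K : NNReal} {s : Set X}
    (hs : s ∈ 𝓝 x) (hg : LipschitzOnWith K g s) (h : X) :
    clarkeUpper g x h ≤ (K : ℝ) * ‖h‖ :=
  limsup_le_of_le (cobdd_le (quot_bound hs hg h))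
    ((quot_bound hs hg h).mono fun _ hp => (abs_le.1 hp).2)

lemma clarkeUpper_neg {x : X} {g : X → ℝ} {K : NNReal} {s : Set X}
    (hs : s ∈ 𝓝 x) (hg : LipschitzOnWith K g s) (h : X) :
    clarkeUpper (fun y => -(g y)) x h = -(clarkeLower g x h) := by
  have hb := quot_bound hs hg h
  have key : (fun p : X × ℝ => (-(g (p.1 + p.2 • h)) - -(g p.1)) / p.2)
      = fun p : X × ℝ => (-1 : ℝ) * ((g (p.1 + p.2 • h) - g p.1) / p.2) := by
    funext p; ring
  rw [clarkeUpper, clarkeLower, key, limsup_const_mul_neg hb (by norm_num : (-1:ℝ) < 0)]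
  ring

lemma clarkeUpper_const_mul_pos {x : X} {g : X → ℝ} {K : NNReal} {s : Set X}
    (hs : s ∈ 𝓝 x) (hg : LipschitzOnWith K g s) {c : ℝ} (hc : 0 < c) (h : X) :
    clarkeUpper (fun y => c * g y) x h = c * clarkeUpper g x h := by
  have hb := quot_bound hs hg h
  have key : (fun p : X × ℝ => (c * g (p.1 + p.2 • h) - c * g p.1) / p.2)
      = fun p : X × ℝ => c * ((g (p.1 + p.2 • h) - g p.1) / p.2) := by
    funext p; ring
  rw [clarkeUpper, clarkeUpper, key, limsup_const_mul_pos hb hc]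

lemma clarkeUpper_const_mul_neg {x : X} {g : X → ℝ} {K : NNReal} {s : Set X}
    (hs : s ∈ 𝓝 x) (hg : LipschitzOnWith K g s) {c : ℝ} (hc : c < 0) (h : X) :
    clarkeUpper (fun y => c * g y) x h = c * clarkeLower g x h := by
  have hb := quot_bound hs hg h
  have key : (fun p : X × ℝ => (c * g (p.1 + p.2 • h) - c * g p.1) / p.2)
      = fun p : X × ℝ => c * ((g (p.1 + p.2 • h) - g p.1) / p.2) := by
    funext p; ring
  rw [clarkeUpper, clarkeLower, key, limsup_const_mul_neg hb hc]

/-! ### Hahn–Banach decomposition -/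

lemma hb_two (p₁ p₂ : X → ℝ) (K₁ : ℝ)
    (h1bd : ∀ h, p₁ h ≤ K₁ * ‖h‖)
    (h1hom : ∀ c : ℝ, 0 < c → ∀ h, p₁ (c • h) = c * p₁ h)
    (h1add : ∀ a b, p₁ (a + b) ≤ p₁ a + p₁ b)
    (h2hom : ∀ c : ℝ, 0 < c → ∀ h, p₂ (c • h) = c * p₂ h)
    (h2add : ∀ a b, p₂ (a + b) ≤ p₂ a + p₂ b)
    (ζ : X →L[ℝ] ℝ) (hζ : ∀ h, ζ h ≤ p₁ h + p₂ h) :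
    ∃ ζ₁ ζ₂ : X →L[ℝ] ℝ, (∀ h, ζ₁ h ≤ p₁ h) ∧ (∀ h, ζ₂ h ≤ p₂ h) ∧ ζ₁ + ζ₂ = ζ := by
  have h10 : p₁ 0 = 0 := by
    have := h1hom 2 (by norm_num) 0
    rw [smul_zero] at this; linarith
  have h20 : p₂ 0 = 0 := by
    have := h2hom 2 (by norm_num) 0
    rw [smul_zero] at this; linarith
  set D : Submodule ℝ (X × X) := LinearMap.range (LinearMap.prod LinearMap.id LinearMap.id)
    with hD
  set f : (X × X) →ₗ.[ℝ] ℝ :=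
    ⟨D, ζ.toLinearMap.comp ((LinearMap.fst ℝ X X).comp D.subtype)⟩ with hf
  set N : X × X → ℝ := fun u => p₁ u.1 + p₂ u.2 with hN
  have hNhom : ∀ c : ℝ, 0 < c → ∀ u : X × X, N (c • u) = c * N u := by
    intro c hc u
    simp only [hN, Prod.smul_fst, Prod.smul_snd, h1hom c hc, h2hom c hc]
    ring
  have hNadd : ∀ u v : X × X, N (u + v) ≤ N u + N v := by
    intro u v
    simp only [hN, Prod.fst_add, Prod.snd_add]
    have := h1add u.1 v.1
    have := h2add u.2 v.2
    linarith
  have hfN : ∀ v : f.domain, f v ≤ N v := by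
    rintro ⟨u, hu⟩
    obtain ⟨a, rfl⟩ := hu
    exact hζ a
  obtain ⟨g, hgf, hgN⟩ := exists_extension_of_le_sublinear f N hNhom hNadd hfN
  have hg1 : ∀ a : X, g (a, 0) ≤ p₁ a := by
    intro a
    have := hgN (a, 0)
    simpa [hN, h20] using this
  have hg2 : ∀ a : X, g (0, a) ≤ p₂ a := by
    intro a
    have := hgN (0, a)
    simpa [hN, h10] using this
  have hdiag : ∀ a : X, g (a, a) = ζ a := by
    intro a
    have hmem : ((a, a) : X × X) ∈ D := ⟨a, rfl⟩
    have := hgf ⟨(a, a), hmem⟩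
    exact this.trans rfl
  set ζ₁lin : X →ₗ[ℝ] ℝ := g.comp (LinearMap.inl ℝ X X) with hζ₁lin
  have hbound : ∀ a : X, ‖ζ₁lin a‖ ≤ K₁ * ‖a‖ := by
    intro a
    have hpos : ζ₁lin a ≤ K₁ * ‖a‖ := (hg1 a).trans (h1bd a)
    have hneg : -(ζ₁lin a) ≤ K₁ * ‖a‖ := by
      have h1 : ζ₁lin (-a) ≤ K₁ * ‖-a‖ := (hg1 (-a)).trans (h1bd (-a))
      rw [map_neg, norm_neg] at h1
      exact h1
    rw [Real.norm_eq_abs, abs_le]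
    constructor <;> linarith
  set ζ₁ : X →L[ℝ] ℝ := LinearMap.mkContinuous ζ₁lin K₁ hbound with hζ₁
  refine ⟨ζ₁, ζ - ζ₁, ?_, ?_, by abel⟩
  · intro h
    exact hg1 h
  · intro h
    have hζ₁h : ζ₁ h = g (h, 0) := rfl
    have hkey : ζ h - ζ₁ h = g (0, h) := by
      rw [hζ₁h, ← hdiag h, ← map_sub]
      congr 1
      simp
    have : (ζ - ζ₁) h = ζ h - ζ₁ h := rfl
    rw [this, hkey]
    exact hg2 h

lemma hb_finset {κ : Type*} [DecidableEq κ] (s : Finset κ) (p : κ → X → ℝ) (K : κ → ℝ)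
    (hbd : ∀ k ∈ s, ∀ h, p k h ≤ K k * ‖h‖)
    (hhom : ∀ k ∈ s, ∀ c : ℝ, 0 < c → ∀ h, p k (c • h) = c * p k h)
    (hadd : ∀ k ∈ s, ∀ a b, p k (a + b) ≤ p k a + p k b)
    (ζ : X →L[ℝ] ℝ) (hζ : ∀ h, ζ h ≤ ∑ k ∈ s, p k h) :
    ∃ w : κ → X →L[ℝ] ℝ, (∀ k ∈ s, ∀ h, w k h ≤ p k h) ∧ ∑ k ∈ s, w k = ζ := by
  classical
  revert ζ
  revert hbd hhom hadd
  induction s using Finset.induction_on with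
  | empty =>
      intro _ _ _ ζ hζ
      have hz : ζ = 0 := by
        ext h
        have h1 : ζ h ≤ 0 := by simpa using hζ h
        have h2 : ζ (-h) ≤ 0 := by simpa using hζ (-h)
        rw [map_neg] at h2
        simp only [ContinuousLinearMap.zero_apply]
        linarith
      exact ⟨fun _ => 0, fun k hk => absurd hk (Finset.notMem_empty k), by simp [hz]⟩
  | @insert a s' ha ih =>
      intro hbd hhom hadd ζ hζ
      have hmem : ∀ k ∈ s', k ∈ insert a s' := fun k hk => Finset.mem_insert_of_mem hk
      have hamem : a ∈ insert a s' := Finset.mem_insert_self a s'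
      obtain ⟨ζ₁, ζ₂, hζ₁, hζ₂, hsum⟩ :=
        hb_two (p a) (fun h => ∑ k ∈ s', p k h) (K a) (hbd a hamem)
          (hhom a hamem)
          (hadd a hamem)
          (by
            intro c hc h
            rw [Finset.mul_sum]
            exact Finset.sum_congr rfl fun k hk => hhom k (hmem k hk) c hc h)
          (by
            intro u v
            calc (∑ k ∈ s', p k (u + v)) ≤ ∑ k ∈ s', (p k u + p k v) :=
                  Finset.sum_le_sum fun k hk => hadd k (hmem k hk) u v
              _ = (∑ k ∈ s', p k u) + ∑ k ∈ s', p k v := Finset.sum_add_distrib)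
          ζ
          (by intro h; simpa [Finset.sum_insert ha] using hζ h)
      obtain ⟨w', hw', hw'sum⟩ := ih (fun k hk => hbd k (hmem k hk))
        (fun k hk => hhom k (hmem k hk)) (fun k hk => hadd k (hmem k hk)) ζ₂ hζ₂
      refine ⟨Function.update w' a ζ₁, ?_, ?_⟩
      · intro k hk h
        rcases Finset.mem_insert.1 hk with rfl | hk'
        · rw [Function.update_self]; exact hζ₁ h
        · rw [Function.update_of_ne (ne_of_mem_of_not_mem hk' ha)]
          exact hw' k hk' h
      · rw [Finset.sum_insert ha, Function.update_self]
        have heq : ∑ k ∈ s', Function.update w' a ζ₁ k = ∑ k ∈ s', w' k :=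
          Finset.sum_congr rfl fun k hk =>
            Function.update_of_ne (ne_of_mem_of_not_mem hk ha) _ _
        rw [heq, hw'sum, hsum]

lemma split3 {M : Type*} [AddCommMonoid M] {n : ℕ} (d : Fin n → ℝ) (v : Fin n → M)
    (h0 : ∀ k, d k = 0 → v k = 0) :
    ∑ k, v k = (∑ k ∈ Finset.univ.filter fun k => 0 < d k, v k)
      + ∑ k ∈ Finset.univ.filter fun k => d k < 0, v k := by
  classical
  rw [← Finset.sum_filter_add_sum_filter_not Finset.univ (fun k => 0 < d k) v]
  congr 1
  rw [Finset.sum_filter, Finset.sum_filter]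
  refine Finset.sum_congr rfl fun k _ => ?_
  rcases lt_trichotomy (d k) 0 with hk | hk | hk
  · rw [if_pos (not_lt.2 hk.le), if_pos hk]
  · rw [if_pos (by simp [hk]), if_neg (by simp [hk]), h0 k hk]
  · rw [if_neg (not_not_intro hk), if_neg (not_lt.2 hk.le)]

end ClarkeAux

namespace ClarkeAux

set_option maxHeartbeats 1000000 in
theorem clarke_aux {N : ℕ} (lam : Fin N → X → ℝ) (F : (Fin N → ℝ) → ℝ) (hF : ContDiff ℝ 1 F)
    (x : X)
    (hlip : ∀ k, ∃ K : NNReal, ∃ s ∈ 𝓝 x, LipschitzOnWith K (lam k) s)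
    (d : Fin N → ℝ)
    (hd : ∀ k, d k = fderiv ℝ F (fun j => lam j x) (Pi.single k 1)) :
    (∀ h : X, clarkeUpper (fun y => F (fun j => lam j y)) x h ≤
        ∑ k, clarkeUpper (fun y => d k * lam k y) x h) ∧
    clarkeSubdiff (fun y => F (fun j => lam j y)) x ⊆
      (∑ k ∈ Finset.univ.filter fun k => 0 < d k, d k • clarkeSubdiff (lam k) x) +
      (∑ k ∈ Finset.univ.filter fun k => d k < 0, d k • clarkeSuperdiff (lam k) x) := by
  classical
  choose K s hs hK using hlip
  have hs0 : (⋂ k, s k) ∈ 𝓝 x := Filter.iInter_mem.2 hs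
  set Km : NNReal := Finset.univ.sup K with hKm
  have hΛlip : LipschitzOnWith Km (fun y (j : Fin N) => lam j y) (⋂ k, s k) := by
    rw [lipschitzOnWith_iff_dist_le_mul]
    intro y hy z hz
    rw [dist_pi_le_iff (by positivity)]
    intro k
    have h1 : dist (lam k y) (lam k z) ≤ (K k : ℝ) * dist y z :=
      lipschitzOnWith_iff_dist_le_mul.1 (hK k) y (Set.mem_iInter.1 hy k) z (Set.mem_iInter.1 hz k)
    have h2 : (K k : ℝ) ≤ (Km : ℝ) := by
      exact_mod_cast Finset.le_sup (Finset.mem_univ k)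
    calc dist (lam k y) (lam k z) ≤ (K k : ℝ) * dist y z := h1
      _ ≤ (Km : ℝ) * dist y z := mul_le_mul_of_nonneg_right h2 dist_nonneg
  have hΛcont : ContinuousAt (fun y (j : Fin N) => lam j y) x :=
    hΛlip.continuousOn.continuousAt hs0
  obtain ⟨KF, t, ht, hFt⟩ := (hF.contDiffAt (x := fun j => lam j x)).exists_lipschitzOnWith
  have hs𝔉 : ((⋂ k, s k) ∩ (fun y (j : Fin N) => lam j y) ⁻¹' t) ∈ 𝓝 x :=
    Filter.inter_mem hs0 (hΛcont.preimage_mem_nhds ht)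
  have h𝔉lip : LipschitzOnWith (KF * Km) (fun y => F (fun j => lam j y))
      ((⋂ k, s k) ∩ (fun y (j : Fin N) => lam j y) ⁻¹' t) :=
    hFt.comp (hΛlip.mono Set.inter_subset_left) fun y hy => hy.2
  have hDfv : ∀ v : Fin N → ℝ, fderiv ℝ F (fun j => lam j x) v = ∑ k, v k * d k := by
    intro v
    have hv : v = ∑ k, v k • (Pi.single k 1 : Fin N → ℝ) := by
      funext j
      rw [Finset.sum_apply]
      simp [Pi.single_apply]
    conv_lhs => rw [hv]
    rw [map_sum]
    refine Finset.sum_congr rfl fun k _ => ?_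
    rw [map_smul, ← hd k]
    simp [smul_eq_mul]
  have hstrict : HasStrictFDerivAt F (fderiv ℝ F (fun j => lam j x)) (fun j => lam j x) :=
    (hF.contDiffAt).hasStrictFDerivAt one_ne_zero
  have core : ∀ h : X, clarkeUpper (fun y => F (fun j => lam j y)) x h ≤
      ∑ k, clarkeUpper (fun y => d k * lam k y) x h := by
    intro h
    set L := (𝓝 x) ×ˢ (𝓝[>] (0:ℝ)) with hL
    set u : X × ℝ → ℝ :=
      fun p => (F (fun j => lam j (p.1 + p.2 • h)) - F (fun j => lam j p.1)) / p.2 with hu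
    set v : Fin N → X × ℝ → ℝ :=
      fun k p => ((d k * lam k (p.1 + p.2 • h)) - d k * lam k p.1) / p.2 with hv
    have hbu : ∀ᶠ p in L, |u p| ≤ ((KF * Km : NNReal) : ℝ) * ‖h‖ := quot_bound hs𝔉 h𝔉lip h
    have hbv : ∀ k, ∀ᶠ p in L, |v k p| ≤ ((Real.nnabs (d k) * K k : NNReal) : ℝ) * ‖h‖ :=
      fun k => quot_bound (hs k) (lip_const_mul (hK k) (d k)) h
    have hsumv : ∀ᶠ p in L, |∑ k, v k p| ≤ ∑ k, ((Real.nnabs (d k) * K k : NNReal) : ℝ) * ‖h‖ := by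
      have hall : ∀ᶠ p in L, ∀ k, |v k p| ≤ ((Real.nnabs (d k) * K k : NNReal) : ℝ) * ‖h‖ :=
        eventually_all.2 hbv
      exact hall.mono fun p hp =>
        (Finset.abs_sum_le_sum_abs _ _).trans (Finset.sum_le_sum fun k _ => hp k)
    have hΛq : ∀ᶠ p in L,
        ‖(fun j => lam j (p.1 + p.2 • h)) - (fun j => lam j p.1)‖ ≤ ((Km : ℝ) * ‖h‖) * p.2
          ∧ 0 < p.2 := by
      filter_upwards [eventually_mem hs0 h] with p hp
      obtain ⟨h1, h2, ht'⟩ := hp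
      refine ⟨?_, ht'⟩
      have hlipd := lipschitzOnWith_iff_dist_le_mul.1 hΛlip _ h2 _ h1
      rw [dist_eq_norm] at hlipd
      have hdd : dist (p.1 + p.2 • h) p.1 = p.2 * ‖h‖ := by
        rw [dist_eq_norm]; simp [norm_smul, abs_of_pos ht']
      rw [hdd] at hlipd
      calc ‖(fun j => lam j (p.1 + p.2 • h)) - (fun j => lam j p.1)‖
          ≤ (Km : ℝ) * (p.2 * ‖h‖) := hlipd
        _ = ((Km : ℝ) * ‖h‖) * p.2 := by ring
    have hEto : Tendsto (fun p => u p - ∑ k, v k p) L (𝓝 0) := by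
      rw [Metric.tendsto_nhds]
      intro ε hε
      have hM : (0:ℝ) < (Km : ℝ) * ‖h‖ + 1 := by positivity
      have hc : 0 < ε / ((Km : ℝ) * ‖h‖ + 1) := by positivity
      have hφ : Tendsto
          (fun p : X × ℝ => ((fun j => lam j (p.1 + p.2 • h)), (fun j => lam j p.1)))
          L (𝓝 ((fun j => lam j x), (fun j => lam j x))) := by
        refine Filter.Tendsto.prodMk_nhds ?_ ?_
        · refine hΛcont.tendsto.comp ?_
          have h2 : Tendsto (fun p : X × ℝ => p.2 • h) L (𝓝 (0 : X)) := by
            have hsnd : Tendsto (fun p : X × ℝ => p.2) L (𝓝 (0:ℝ)) :=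
              tendsto_snd.mono_right nhdsWithin_le_nhds
            simpa using hsnd.smul_const h
          have := tendsto_fst.add h2
          simpa using this
        · exact hΛcont.tendsto.comp tendsto_fst
      have hlittle := Asymptotics.isLittleO_iff.1 hstrict.isLittleO hc
      filter_upwards [hφ.eventually hlittle, hΛq] with p hp hq
      obtain ⟨hq1, ht'⟩ := hq
      have hEp : u p - ∑ k, v k p =
          (F (fun j => lam j (p.1 + p.2 • h)) - F (fun j => lam j p.1)
            - (fderiv ℝ F (fun j => lam j x))
                ((fun j => lam j (p.1 + p.2 • h)) - fun j => lam j p.1)) / p.2 := by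
        have hsum : ∑ k, v k p =
            (fderiv ℝ F (fun j => lam j x))
              ((fun j => lam j (p.1 + p.2 • h)) - fun j => lam j p.1) / p.2 := by
          rw [hDfv, Finset.sum_div]
          refine Finset.sum_congr rfl fun k _ => ?_
          simp only [hv, Pi.sub_apply]
          ring
        rw [hsum]
        simp only [hu]
        rw [div_sub_div_same]
      rw [Real.dist_eq, sub_zero, hEp, abs_div, abs_of_pos ht']
      have hp' : |F (fun j => lam j (p.1 + p.2 • h)) - F (fun j => lam j p.1)
            - (fderiv ℝ F (fun j => lam j x))
                ((fun j => lam j (p.1 + p.2 • h)) - fun j => lam j p.1)|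
          ≤ (ε / ((Km : ℝ) * ‖h‖ + 1))
            * ‖(fun j => lam j (p.1 + p.2 • h)) - (fun j => lam j p.1)‖ := by
        have := hp
        simpa [Real.norm_eq_abs] using this
      have hstep : |F (fun j => lam j (p.1 + p.2 • h)) - F (fun j => lam j p.1)
            - (fderiv ℝ F (fun j => lam j x))
                ((fun j => lam j (p.1 + p.2 • h)) - fun j => lam j p.1)| / p.2
          ≤ (ε / ((Km : ℝ) * ‖h‖ + 1)) * ((Km : ℝ) * ‖h‖) := by
        rw [div_le_iff₀ ht']
        calc |F (fun j => lam j (p.1 + p.2 • h)) - F (fun j => lam j p.1)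
              - (fderiv ℝ F (fun j => lam j x))
                  ((fun j => lam j (p.1 + p.2 • h)) - fun j => lam j p.1)|
            ≤ (ε / ((Km : ℝ) * ‖h‖ + 1))
              * ‖(fun j => lam j (p.1 + p.2 • h)) - (fun j => lam j p.1)‖ := hp'
          _ ≤ (ε / ((Km : ℝ) * ‖h‖ + 1)) * (((Km : ℝ) * ‖h‖) * p.2) := by
              exact mul_le_mul_of_nonneg_left hq1 hc.le
          _ = (ε / ((Km : ℝ) * ‖h‖ + 1)) * ((Km : ℝ) * ‖h‖) * p.2 := by ring
      have hlt : (ε / ((Km : ℝ) * ‖h‖ + 1)) * ((Km : ℝ) * ‖h‖) < ε := by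
        have h1 : (ε / ((Km : ℝ) * ‖h‖ + 1)) * ((Km : ℝ) * ‖h‖)
            < (ε / ((Km : ℝ) * ‖h‖ + 1)) * ((Km : ℝ) * ‖h‖ + 1) :=
          mul_lt_mul_of_pos_left (lt_add_one _) hc
        rwa [div_mul_cancel₀ _ hM.ne'] at h1
      exact lt_of_le_of_lt hstep hlt
    have hbE : ∀ᶠ p in L, |u p - ∑ k, v k p| ≤ 1 := by
      have := Metric.tendsto_nhds.1 hEto 1 one_pos
      refine this.mono fun p hp => ?_
      rw [Real.dist_eq, sub_zero] at hp
      exact hp.le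
    have hueq : u = fun p => (∑ k, v k p) + (u p - ∑ k, v k p) := by
      funext p; ring
    have hfin : limsup u L ≤ ∑ k, limsup (v k) L := by
      calc limsup u L = limsup (fun p => (∑ k, v k p) + (u p - ∑ k, v k p)) L := by
            rw [← hueq]
        _ ≤ limsup (fun p => ∑ k, v k p) L + limsup (fun p => u p - ∑ k, v k p) L :=
            limsup_add_le (bdd_ge hsumv) (bdd_le hsumv) (cobdd_le hbE) (bdd_le hbE)
        _ = limsup (fun p => ∑ k, v k p) L := by rw [hEto.limsup_eq, add_zero]
        _ ≤ ∑ k, limsup (v k) L := limsup_sum_le Finset.univ v fun k _ => ⟨_, hbv k⟩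
    exact hfin
  refine ⟨core, ?_⟩
  intro ζ hζ
  have hζ' : ∀ h : X, ζ h ≤ ∑ k, clarkeUpper (fun y => d k * lam k y) x h :=
    fun h => (hζ h).trans (core h)
  obtain ⟨w, hw, hwsum⟩ := hb_finset Finset.univ
    (fun k h => clarkeUpper (fun y => d k * lam k y) x h)
    (fun k => ((Real.nnabs (d k) * K k : NNReal) : ℝ))
    (fun k _ h => clarkeUpper_le_bound (hs k) (lip_const_mul (hK k) (d k)) h)
    (fun k _ c hc h => clarkeUpper_smul_pos (hs k) (lip_const_mul (hK k) (d k)) hc h)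
    (fun k _ a b => clarkeUpper_add_le (hs k) (lip_const_mul (hK k) (d k)) a b)
    ζ hζ'
  have hP0 : ∀ k, d k = 0 → ∀ h : X, clarkeUpper (fun y => d k * lam k y) x h = 0 := by
    intro k hk h
    have hzero : (fun p : X × ℝ => ((d k * lam k (p.1 + p.2 • h)) - d k * lam k p.1) / p.2)
        = fun _ => (0:ℝ) := by
      funext p; rw [hk]; ring
    rw [clarkeUpper, hzero, limsup_const]
  have hw0 : ∀ k, d k = 0 → w k = 0 := by
    intro k hk
    ext h
    have h1 : w k h ≤ 0 := by
      have := hw k (Finset.mem_univ k) h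
      rwa [hP0 k hk h] at this
    have h2 : w k (-h) ≤ 0 := by
      have := hw k (Finset.mem_univ k) (-h)
      rwa [hP0 k hk (-h)] at this
    rw [map_neg] at h2
    simp only [ContinuousLinearMap.zero_apply]
    linarith
  rw [← hwsum, split3 d w hw0]
  refine Set.add_mem_add ?_ ?_
  · refine Set.finset_sum_mem_finset_sum _ _ _ fun k hk => ?_
    have hdk : 0 < d k := (Finset.mem_filter.1 hk).2
    refine Set.mem_smul_set.2 ⟨(d k)⁻¹ • w k, ?_, ?_⟩
    · intro h'
      have h1 : w k h' ≤ d k * clarkeUpper (lam k) x h' := by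
        have := hw k (Finset.mem_univ k) h'
        rwa [clarkeUpper_const_mul_pos (hs k) (hK k) hdk h'] at this
      have h2 : ((d k)⁻¹ • w k) h' = (d k)⁻¹ * w k h' := rfl
      rw [h2, inv_mul_eq_div, div_le_iff₀ hdk, mul_comm]
      exact h1
    · rw [smul_smul, mul_inv_cancel₀ hdk.ne', one_smul]
  · refine Set.finset_sum_mem_finset_sum _ _ _ fun k hk => ?_
    have hdk : d k < 0 := (Finset.mem_filter.1 hk).2
    refine Set.mem_smul_set.2 ⟨(d k)⁻¹ • w k, ?_, ?_⟩
    · intro h'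
      have h1 : w k h' ≤ d k * clarkeLower (lam k) x h' := by
        have := hw k (Finset.mem_univ k) h'
        rwa [clarkeUpper_const_mul_neg (hs k) (hK k) hdk h'] at this
      have h2 : ((d k)⁻¹ • w k) h' = (d k)⁻¹ * w k h' := rfl
      rw [h2]
      have h3 := mul_le_mul_of_nonpos_left h1 (inv_nonpos.2 hdk.le)
      rwa [← mul_assoc, inv_mul_cancel₀ hdk.ne, one_mul] at h3
    · rw [smul_smul, mul_inv_cancel₀ hdk.ne, one_smul]

end ClarkeAux

namespace ClarkeAux

lemma comp_lip {N : ℕ} (lam : Fin N → X → ℝ) (F : (Fin N → ℝ) → ℝ) (hF : ContDiff ℝ 1 F)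
    (x : X) (hlip : ∀ k, ∃ K : NNReal, ∃ s ∈ 𝓝 x, LipschitzOnWith K (lam k) s) :
    ∃ K : NNReal, ∃ s ∈ 𝓝 x, LipschitzOnWith K (fun y => F (fun j => lam j y)) s := by
  classical
  choose K s hs hK using hlip
  have hs0 : (⋂ k, s k) ∈ 𝓝 x := Filter.iInter_mem.2 hs
  set Km : NNReal := Finset.univ.sup K with hKm
  have hΛlip : LipschitzOnWith Km (fun y (j : Fin N) => lam j y) (⋂ k, s k) := by
    rw [lipschitzOnWith_iff_dist_le_mul]
    intro y hy z hz
    rw [dist_pi_le_iff (by positivity)]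
    intro k
    have h1 : dist (lam k y) (lam k z) ≤ (K k : ℝ) * dist y z :=
      lipschitzOnWith_iff_dist_le_mul.1 (hK k) y (Set.mem_iInter.1 hy k) z (Set.mem_iInter.1 hz k)
    have h2 : (K k : ℝ) ≤ (Km : ℝ) := by
      exact_mod_cast Finset.le_sup (Finset.mem_univ k)
    calc dist (lam k y) (lam k z) ≤ (K k : ℝ) * dist y z := h1
      _ ≤ (Km : ℝ) * dist y z := mul_le_mul_of_nonneg_right h2 dist_nonneg
  have hΛcont : ContinuousAt (fun y (j : Fin N) => lam j y) x :=
    hΛlip.continuousOn.continuousAt hs0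
  obtain ⟨KF, t, ht, hFt⟩ := (hF.contDiffAt (x := fun j => lam j x)).exists_lipschitzOnWith
  refine ⟨KF * Km, (⋂ k, s k) ∩ (fun y (j : Fin N) => lam j y) ⁻¹' t,
    Filter.inter_mem hs0 (hΛcont.preimage_mem_nhds ht), ?_⟩
  exact hFt.comp (hΛlip.mono Set.inter_subset_left) fun y hy => hy.2

end ClarkeAux

/-- **chain rule for Clarke derivatives and sub/superdifferentials.**
Let `λ_1,…,λ_N : Ω → ℝ` be locally Lipschitz, `F ∈ C¹(ℝ^N)`, `𝔉 := F ∘ (λ_1,…,λ_N)` and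
`d_k(x) := ∂_k F(λ_1(x),…,λ_N(x))`.  Then for every `h`,
`𝔉_+^∘(x;h) ≤ ∑_{k : d_k>0} d_k·(λ_k)_+^∘(x;h) + ∑_{k : d_k<0} d_k·(λ_k)_−^∘(x;h)`, and
`∂_C^±𝔉(x) ⊆ ∑_{k : d_k>0} d_k • ∂_C^±λ_k(x) + ∑_{k : d_k<0} d_k • ∂_C^∓λ_k(x)`, for both
choices of sign. -/
theorem clarke_chain_rule
    [CompleteSpace X] {Ω : Set X} (hΩ : IsOpen Ω) {N : ℕ}
    (lam : Fin N → X → ℝ)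
    (hlip : ∀ k, ∀ z ∈ Ω, ∃ K : NNReal, ∃ s ∈ 𝓝 z, LipschitzOnWith K (lam k) s)
    (F : (Fin N → ℝ) → ℝ) (hF : ContDiff ℝ 1 F)
    (x : X) (hx : x ∈ Ω)
    (d : Fin N → ℝ)
    (hd : ∀ k, d k = fderiv ℝ F (fun j => lam j x) (Pi.single k 1)) :
    (∀ h : X, clarkeUpper (fun y => F (fun j => lam j y)) x h ≤
        (∑ k ∈ Finset.univ.filter fun k => 0 < d k, d k * clarkeUpper (lam k) x h) +
        (∑ k ∈ Finset.univ.filter fun k => d k < 0, d k * clarkeLower (lam k) x h)) ∧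
    clarkeSubdiff (fun y => F (fun j => lam j y)) x ⊆
      (∑ k ∈ Finset.univ.filter fun k => 0 < d k, d k • clarkeSubdiff (lam k) x) +
      (∑ k ∈ Finset.univ.filter fun k => d k < 0, d k • clarkeSuperdiff (lam k) x) ∧
    clarkeSuperdiff (fun y => F (fun j => lam j y)) x ⊆
      (∑ k ∈ Finset.univ.filter fun k => 0 < d k, d k • clarkeSuperdiff (lam k) x) +
      (∑ k ∈ Finset.univ.filter fun k => d k < 0, d k • clarkeSubdiff (lam k) x) := by
  classical
  have hlipx : ∀ k, ∃ K : NNReal, ∃ s ∈ 𝓝 x, LipschitzOnWith K (lam k) s :=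
    fun k => hlip k x hx
  choose K s hs hK using hlipx
  obtain ⟨core, sub⟩ := ClarkeAux.clarke_aux lam F hF x
    (fun k => ⟨K k, s k, hs k, hK k⟩) d hd
  refine ⟨?_, sub, ?_⟩
  · intro h
    refine (core h).trans ?_
    have h0 : ∀ k, d k = 0 → clarkeUpper (fun y => d k * lam k y) x h = 0 := by
      intro k hk
      have hzero : (fun p : X × ℝ => ((d k * lam k (p.1 + p.2 • h)) - d k * lam k p.1) / p.2)
          = fun _ => (0:ℝ) := by
        funext p; rw [hk]; ring
      rw [clarkeUpper, hzero, limsup_const]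
    rw [ClarkeAux.split3 d (fun k => clarkeUpper (fun y => d k * lam k y) x h) h0]
    refine add_le_add ?_ ?_
    · refine le_of_eq (Finset.sum_congr rfl fun k hk => ?_)
      exact ClarkeAux.clarkeUpper_const_mul_pos (hs k) (hK k) (Finset.mem_filter.1 hk).2 h
    · refine le_of_eq (Finset.sum_congr rfl fun k hk => ?_)
      exact ClarkeAux.clarkeUpper_const_mul_neg (hs k) (hK k) (Finset.mem_filter.1 hk).2 h
  · intro ζ hζ
    obtain ⟨core', sub'⟩ := ClarkeAux.clarke_aux lam (fun v => -(F v)) hF.neg x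
      (fun k => ⟨K k, s k, hs k, hK k⟩) (fun k => -(d k))
      (by
        intro k
        rw [fderiv_fun_neg]
        simp only [ContinuousLinearMap.neg_apply]
        rw [← hd k])
    obtain ⟨KC, sC, hsC, hC⟩ := ClarkeAux.comp_lip lam F hF x
      (fun k => ⟨K k, s k, hs k, hK k⟩)
    have hmem : -ζ ∈ clarkeSubdiff (fun y => -(F (fun j => lam j y))) x := by
      intro h
      have hneg : clarkeUpper (fun y => -(F (fun j => lam j y))) x h
          = -(clarkeLower (fun y => F (fun j => lam j y)) x h) :=
        ClarkeAux.clarkeUpper_neg hsC hC h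
      have hlow := hζ h
      have : (-ζ) h = -(ζ h) := rfl
      rw [this, hneg]
      linarith
    have hres := sub' hmem
    obtain ⟨a, ha, b, hb, hab⟩ := Set.mem_add.1 hres
    have hf1 : (Finset.univ.filter fun k : Fin N => 0 < -(d k))
        = Finset.univ.filter fun k : Fin N => d k < 0 := by
      refine Finset.filter_congr fun k _ => ?_
      simp [neg_pos]
    have hf2 : (Finset.univ.filter fun k : Fin N => -(d k) < 0)
        = Finset.univ.filter fun k : Fin N => 0 < d k := by
      refine Finset.filter_congr fun k _ => ?_
      simp
    rw [hf1] at ha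
    rw [hf2] at hb
    obtain ⟨ga, hga, hgaeq⟩ := (Set.mem_finset_sum _ _ a).1 ha
    obtain ⟨gb, hgb, hgbeq⟩ := (Set.mem_finset_sum _ _ b).1 hb
    have hamem : -a ∈ ∑ k ∈ Finset.univ.filter fun k => d k < 0,
        d k • clarkeSubdiff (lam k) x := by
      rw [← hgaeq, ← Finset.sum_neg_distrib]
      refine Set.finset_sum_mem_finset_sum _ _ _ fun k hk => ?_
      obtain ⟨η, hη, hηeq⟩ := Set.mem_smul_set.1 (hga hk)
      exact Set.mem_smul_set.2 ⟨η, hη, by rw [← hηeq]; ext v; simp⟩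
    have hbmem : -b ∈ ∑ k ∈ Finset.univ.filter fun k => 0 < d k,
        d k • clarkeSuperdiff (lam k) x := by
      rw [← hgbeq, ← Finset.sum_neg_distrib]
      refine Set.finset_sum_mem_finset_sum _ _ _ fun k hk => ?_
      obtain ⟨η, hη, hηeq⟩ := Set.mem_smul_set.1 (hgb hk)
      exact Set.mem_smul_set.2 ⟨η, hη, by rw [← hηeq]; ext v; simp⟩
    have hζeq : ζ = -b + -a := by
      have h2 : ζ = -(a + b) := by rw [hab, neg_neg]
      rw [h2, neg_add]
      abel
    rw [hζeq]
    exact Set.add_mem_add hbmem hamem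
end

section
/- Let 𝔉 : Ω → ℝ be locally Lipschitz and x ∈ Ω. If 𝔉 is upper regular at x, then the left directional derivative 𝔉_ℓ'(x;h) exists in every direction h ∈ X and equals 𝔉_−^∘(x;h), and ∂_C^−𝔉(x) = ∂^−𝔉(x). Likewise, if 𝔉 is lower regular at x, then 𝔉_ℓ'(x;h) = 𝔉_+^∘(x;h) for every h ∈ X and ∂_C^+𝔉(x) = ∂^+𝔉(x). -/
open Filter Topology Set Pointwise

variable {X : Type*} [NormedAddCommGroup X] [NormedSpace ℝ X]

/-- In `ℝ`, `liminf (-u) = - limsup u` unconditionally (thanks to the junk-value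
conventions of `sSup`/`sInf` on `ℝ`). -/
lemma liminf_neg_real {α : Type*} {f : Filter α} (u : α → ℝ) :
    Filter.liminf (fun x => -u x) f = - Filter.limsup u f := by
  rw [Filter.liminf_eq, Filter.limsup_eq, Real.sInf_def, neg_neg]
  congr 1
  ext a
  simp only [Set.mem_setOf_eq, Set.mem_neg]
  constructor
  · intro h; filter_upwards [h] with n hn; linarith
  · intro h; filter_upwards [h] with n hn; linarith

/-- In `ℝ`, `limsup (-u) = - liminf u` unconditionally. -/
lemma limsup_neg_real {α : Type*} {f : Filter α} (u : α → ℝ) :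
    Filter.limsup (fun x => -u x) f = - Filter.liminf u f := by
  have := liminf_neg_real (f := f) (fun x => -u x)
  simp only [neg_neg] at this
  rw [this, neg_neg]

/-- The shear `(y, t) ↦ (y + t•h, t)` preserves the filter `𝓝 x ×ˢ 𝓝[>] 0`. -/
lemma map_shear (x h : X) :
    Filter.map (fun p : X × ℝ => (p.1 + p.2 • h, p.2)) ((𝓝 x) ×ˢ (𝓝[>] (0:ℝ)))
      = (𝓝 x) ×ˢ (𝓝[>] (0:ℝ)) := by
  have key : ∀ g : X, Filter.map (fun p : X × ℝ => (p.1 + p.2 • g, p.2))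
      ((𝓝 x) ×ˢ (𝓝[>] (0:ℝ))) ≤ (𝓝 x) ×ˢ (𝓝[>] (0:ℝ)) := by
    intro g
    rw [Filter.le_prod]
    refine ⟨?_, tendsto_snd⟩
    have h1 : Filter.Tendsto (fun p : X × ℝ => p.1 + p.2 • g) ((𝓝 x) ×ˢ (𝓝[>] (0:ℝ)))
        (𝓝 (x + (0:ℝ) • g)) :=
      Filter.Tendsto.add tendsto_fst ((tendsto_snd.mono_right nhdsWithin_le_nhds).smul_const g)
    simpa [Function.comp_def] using h1
  refine le_antisymm (key h) ?_
  have h2 := Filter.map_mono (m := fun p : X × ℝ => (p.1 + p.2 • h, p.2)) (key (-h))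
  rw [Filter.map_map] at h2
  have he : ((fun p : X × ℝ => (p.1 + p.2 • h, p.2)) ∘ fun p : X × ℝ => (p.1 + p.2 • (-h), p.2))
      = id := by
    funext p; simp
  rwa [he, Filter.map_id] at h2

lemma clarkeLower_neg (F : X → ℝ) (x h : X) :
    clarkeLower F x (-h) = - clarkeUpper F x h := by
  unfold clarkeLower clarkeUpper
  conv_lhs => rw [← map_shear x h]
  rw [← Filter.liminf_comp]
  have he : ((fun p : X × ℝ => (F (p.1 + p.2 • (-h)) - F p.1) / p.2) ∘
      fun p : X × ℝ => (p.1 + p.2 • h, p.2))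
      = fun p : X × ℝ => -((F (p.1 + p.2 • h) - F p.1) / p.2) := by
    funext p
    simp [Function.comp]; ring
  rw [he, liminf_neg_real]

lemma clarkeUpper_neg (F : X → ℝ) (x h : X) :
    clarkeUpper F x (-h) = - clarkeLower F x h := by
  unfold clarkeLower clarkeUpper
  conv_lhs => rw [← map_shear x h]
  rw [← Filter.limsup_comp]
  have he : ((fun p : X × ℝ => (F (p.1 + p.2 • (-h)) - F p.1) / p.2) ∘
      fun p : X × ℝ => (p.1 + p.2 • h, p.2))
      = fun p : X × ℝ => -((F (p.1 + p.2 • h) - F p.1) / p.2) := by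
    funext p
    simp [Function.comp]; ring
  rw [he, limsup_neg_real]

/-- The left directional derivative in direction `h` exists and equals `-D(-h)`,
whenever all right directional derivatives exist. -/
lemma left_deriv_eq (F : X → ℝ) (x : X) (D : X → ℝ)
    (hD : ∀ h : X, Tendsto (fun t : ℝ => (F (x + t • h) - F x) / t)
      (𝓝[>] (0:ℝ)) (𝓝 (D h))) (h : X) :
    Tendsto (fun t : ℝ => (F (x + t • h) - F x) / t) (𝓝[<] (0:ℝ)) (𝓝 (-D (-h))) := by
  have hneg : Tendsto (fun t : ℝ => -t) (𝓝[<] (0:ℝ)) (𝓝[>] (0:ℝ)) := by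
    simpa using (tendsto_neg_nhdsLT (a := (0:ℝ)))
  have := ((hD (-h)).neg).comp hneg
  have he : ((fun s : ℝ => -((F (x + s • (-h)) - F x) / s)) ∘ fun t : ℝ => -t)
      = fun t : ℝ => (F (x + t • h) - F x) / t := by
    funext t
    simp only [Function.comp, smul_neg, neg_smul, neg_neg, div_neg, neg_neg]
  rwa [← he]

/-- **upper/lower regularity.**
Let `𝔉 : Ω → ℝ` be locally Lipschitz, `x ∈ Ω`, and assume `𝔉` has right directional
derivatives `D h` at `x` in every direction.
If `𝔉` is upper regular at `x` (i.e. `D h = 𝔉_+^∘(x;h)` for all `h`), then the left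
directional derivative exists in every direction and equals `𝔉_−^∘(x;h)`, and
`∂_C^−𝔉(x) = ∂^−𝔉(x)`.  Likewise, if `𝔉` is lower regular at `x`
(i.e. `D h = 𝔉_−^∘(x;h)` for all `h`), then the left directional derivative equals
`𝔉_+^∘(x;h)` for every `h` and `∂_C^+𝔉(x) = ∂^+𝔉(x)`. -/
theorem upper_lower_regular_consequences
    [CompleteSpace X] {Ω : Set X} (hΩ : IsOpen Ω)
    (F : X → ℝ)
    (hlip : ∀ z ∈ Ω, ∃ K : NNReal, ∃ s ∈ 𝓝 z, LipschitzOnWith K F s)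
    (x : X) (hx : x ∈ Ω)
    (D : X → ℝ)
    (hD : ∀ h : X, Tendsto (fun t : ℝ => (F (x + t • h) - F x) / t)
      (𝓝[>] (0:ℝ)) (𝓝 (D h))) :
    ((∀ h : X, D h = clarkeUpper F x h) →
      (∀ h : X, Tendsto (fun t : ℝ => (F (x + t • h) - F x) / t)
        (𝓝[<] (0:ℝ)) (𝓝 (clarkeLower F x h))) ∧
      clarkeSubdiff F x = {ζ : X →L[ℝ] ℝ | ∀ h : X, ζ h ≤ D h}) ∧
    ((∀ h : X, D h = clarkeLower F x h) →
      (∀ h : X, Tendsto (fun t : ℝ => (F (x + t • h) - F x) / t)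
        (𝓝[<] (0:ℝ)) (𝓝 (clarkeUpper F x h))) ∧
      clarkeSuperdiff F x = {ζ : X →L[ℝ] ℝ | ∀ h : X, D h ≤ ζ h}) := by
  constructor
  · intro hreg
    constructor
    · intro h
      have hval : -D (-h) = clarkeLower F x h := by
        rw [hreg (-h), clarkeUpper_neg, neg_neg]
      rw [← hval]
      exact left_deriv_eq F x D hD h
    · ext ζ
      simp only [clarkeSubdiff, Set.mem_setOf_eq]
      constructor
      · intro hζ h; rw [hreg h]; exact hζ h
      · intro hζ h; rw [← hreg h]; exact hζ h
  · intro hreg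
    constructor
    · intro h
      have hval : -D (-h) = clarkeUpper F x h := by
        rw [hreg (-h), clarkeLower_neg, neg_neg]
      rw [← hval]
      exact left_deriv_eq F x D hD h
    · ext ζ
      simp only [clarkeSuperdiff, Set.mem_setOf_eq]
      constructor
      · intro hζ h; rw [hreg h]; exact hζ h
      · intro hζ h; rw [← hreg h]; exact hζ h
end

section
/- Under the standing assumptions (B), (C), (E), (F), (G) on the Rayleigh quotient setting, for every integer k ≥ 1 the eigenvalue function λ_k : Ω → ℝ is upper semicontinuous on Ω. -/
open Filter Topology Set


section Aux

/-- A bilinear form on a finite-dimensional coordinate space gives a continuous quadratic map. -/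
private lemma bilin_cont {n : ℕ} (M : (Fin n → ℝ) →ₗ[ℝ] (Fin n → ℝ) →ₗ[ℝ] ℝ) :
    Continuous fun c => M c c := by
  have hT : Continuous fun c => LinearMap.toContinuousLinearMap (M c) :=
    ((LinearMap.toContinuousLinearMap :
        ((Fin n → ℝ) →ₗ[ℝ] ℝ) ≃ₗ[ℝ] ((Fin n → ℝ) →L[ℝ] ℝ)).toLinearMap.comp
      M).continuous_of_finiteDimensional
  exact hT.clm_apply continuous_id

private lemma bilin_smul {n : ℕ} (M : (Fin n → ℝ) →ₗ[ℝ] (Fin n → ℝ) →ₗ[ℝ] ℝ) (s : ℝ)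
    (c : Fin n → ℝ) : M (s • c) (s • c) = s ^ 2 * M c c := by
  simp [map_smul, LinearMap.smul_apply, smul_eq_mul]; ring

/-- On a nontrivial finite-dimensional coordinate space, a quadratic form dominated on the
sphere is dominated everywhere by a positive-definite quadratic form. -/
private lemma exists_bound_of_posdef {n : ℕ} (hn : 0 < n)
    (q g : (Fin n → ℝ) →ₗ[ℝ] (Fin n → ℝ) →ₗ[ℝ] ℝ)
    (hq : ∀ c : Fin n → ℝ, c ≠ 0 → 0 < q c c) :
    ∃ M : ℝ, 1 ≤ M ∧ ∀ c, g c c ≤ M * q c c := by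
  haveI : Nonempty (Fin n) := ⟨⟨0, hn⟩⟩
  have hS : (Metric.sphere (0 : Fin n → ℝ) 1).Nonempty :=
    NormedSpace.sphere_nonempty.mpr zero_le_one
  obtain ⟨c₀, hc₀S, hc₀min⟩ := (isCompact_sphere (0 : Fin n → ℝ) 1).exists_isMinOn hS
    (bilin_cont q).continuousOn
  obtain ⟨c₁, hc₁S, hc₁max⟩ := (isCompact_sphere (0 : Fin n → ℝ) 1).exists_isMaxOn hS
    (bilin_cont g).continuousOn
  have hc₀ : c₀ ≠ 0 := by
    intro h
    simpa [h] using mem_sphere_iff_norm.mp hc₀S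
  have hm : 0 < q c₀ c₀ := hq c₀ hc₀
  set m := q c₀ c₀ with hmdef
  set M₀ := g c₁ c₁ with hM₀def
  refine ⟨max (M₀ / m) 1, le_max_right _ _, fun c => ?_⟩
  have key : ∀ e : Fin n → ℝ, ‖e‖ = 1 → g e e ≤ max (M₀ / m) 1 * q e e := by
    intro e he
    have heS : e ∈ Metric.sphere (0 : Fin n → ℝ) 1 := by
      simpa [mem_sphere_zero_iff_norm] using he
    have h1 : m ≤ q e e := hc₀min heS
    have h2 : g e e ≤ M₀ := hc₁max heS
    have hM : M₀ ≤ max (M₀ / m) 1 * m := by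
      have h3 := le_max_left (M₀ / m) 1
      calc M₀ = (M₀ / m) * m := by field_simp
        _ ≤ max (M₀ / m) 1 * m := mul_le_mul_of_nonneg_right h3 hm.le
    have hM1 : (1:ℝ) ≤ max (M₀ / m) 1 := le_max_right _ _
    nlinarith
  rcases eq_or_ne c 0 with rfl | hc
  · simp
  · have hs0 : (0:ℝ) < ‖c‖ := norm_pos_iff.mpr hc
    have hnd : ‖(‖c‖⁻¹ • c)‖ = 1 := by
      rw [norm_smul, norm_inv, norm_norm, inv_mul_cancel₀ hs0.ne']
    have h := key _ hnd
    rw [bilin_smul, bilin_smul] at h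
    have h2 := mul_le_mul_of_nonneg_left h (sq_nonneg ‖c‖)
    have e1 : ‖c‖ ^ 2 * (‖c‖⁻¹ ^ 2 * g c c) = g c c := by
      field_simp
    have e2 : ‖c‖ ^ 2 * (max (M₀ / m) 1 * (‖c‖⁻¹ ^ 2 * q c c)) = max (M₀ / m) 1 * q c c := by
      field_simp
    rw [e1, e2] at h2
    exact h2

/-- Mean value inequality for real-valued functions on a convex set. -/
private lemma mvt_bound {X : Type*} [NormedAddCommGroup X] [NormedSpace ℝ X]
    {f : X → ℝ} {f' : X → X →L[ℝ] ℝ} {s : Set X} (hconv : Convex ℝ s)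
    (hd : ∀ z ∈ s, HasFDerivAt f (f' z) z) {K : ℝ} (hK : ∀ z ∈ s, ‖f' z‖ ≤ K)
    {x y : X} (hx : x ∈ s) (hy : y ∈ s) : |f y - f x| ≤ K * ‖y - x‖ := by
  have := hconv.norm_image_sub_le_of_norm_hasFDerivWithin_le
    (fun z hz => (hd z hz).hasFDerivWithinAt) hK hx hy
  simpa [Real.norm_eq_abs] using this

end Aux



/-- Data for the abstract Rayleigh-quotient setting: a Banach space `X` of parameters, a
real vector space `Y`, a linear subspace `H ⊆ Y`, bilinear forms `B x` (polarizing
`Q(x,·)`) on `Y` and `Γ x` (polarizing `G(x,·)`) on `H`, the local shift `θ` used to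
define the Hilbert norm `N`, and the Fréchet-derivative data `Bx`, `Γx`. -/
structure RayleighData (X Y : Type*) [NormedAddCommGroup X] [NormedSpace ℝ X]
    [AddCommGroup Y] [Module ℝ Y] where
  /-- The subspace `H ⊆ Y`. -/
  H : Submodule ℝ Y
  /-- The symmetric bilinear form `B x` polarizing `Q(x,·)`. -/
  B : X → Y →ₗ[ℝ] Y →ₗ[ℝ] ℝ
  /-- The symmetric bilinear form `Γ x` polarizing `G(x,·)`, defined on `H`. -/
  Γ : X → H →ₗ[ℝ] H →ₗ[ℝ] ℝ
  /-- The shift `θ` used to define the Hilbert norm `N`. -/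
  θ : X → ℝ
  /-- `Bx x u v` is the Fréchet derivative of `x' ↦ B x' u v` at `x`. -/
  Bx : X → Y → Y → (X →L[ℝ] ℝ)
  /-- `Γx x u v` is the Fréchet derivative of `x' ↦ Γ x' u v` at `x`. -/
  Γx : X → H → H → (X →L[ℝ] ℝ)

namespace RayleighData

variable {X Y : Type*} [NormedAddCommGroup X] [NormedSpace ℝ X]
  [AddCommGroup Y] [Module ℝ Y] (r : RayleighData X Y)

/-- The quadratic form `Q(x,u) = B(x,u,u)`. -/
def Q (x : X) (u : Y) : ℝ := r.B x u u

/-- The quadratic form `G(x,v) = Γ(x,v,v)` on `H`. -/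
def G (x : X) (v : r.H) : ℝ := r.Γ x v v

/-- The norm `N(x,v) = (G(x,v) + θ(x)·Q(x,v))^{1/2}` on `H`. -/
noncomputable def N (x : X) (v : r.H) : ℝ := Real.sqrt (r.G x v + r.θ x * r.Q x ↑v)

/-- The Rayleigh quotient `R(x,v) = G(x,v)/Q(x,v)`. -/
noncomputable def R (x : X) (v : r.H) : ℝ := r.G x v / r.Q x ↑v

/-- The `k`-th min-max eigenvalue
`λ_k(x) = inf_{E ⊆ H, dim E = k} sup_{u ∈ E∖{0}} R(x,u)`. -/
noncomputable def eig (k : ℕ) (x : X) : ℝ :=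
  ⨅ E : {E : Submodule ℝ r.H // Module.finrank ℝ E = k},
    ⨆ u : {u : r.H // u ∈ E.1 ∧ u ≠ 0}, r.R x u.1

/-- `Qx x u` : the Fréchet derivative at `x` of `x' ↦ Q(x',u)`. -/
noncomputable def Qx (x : X) (u : Y) : X →L[ℝ] ℝ := r.Bx x u u

/-- `Gx x v` : the Fréchet derivative at `x` of `x' ↦ G(x',v)`. -/
noncomputable def Gx (x : X) (v : r.H) : X →L[ℝ] ℝ := r.Γx x v v

/-- `Rx x v` : the Fréchet derivative at `x` of `x' ↦ R(x',v)`, given by the quotient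
rule `(G_x − R·Q_x)/Q`; it is invariant under nonzero rescaling of `v`. -/
noncomputable def Rx (x : X) (v : r.H) : X →L[ℝ] ℝ :=
  (r.Q x ↑v)⁻¹ • (r.Gx x v - r.R x v • r.Qx x ↑v)

/-- `B x` is symmetric. -/
def SymmB : Prop := ∀ (x : X) (u v : Y), r.B x u v = r.B x v u

/-- `Γ x` is symmetric. -/
def SymmΓ : Prop := ∀ (x : X) (u v : r.H), r.Γ x u v = r.Γ x v u

/-- `Q(x,·)` is positive definite on `Y` for each `x ∈ Ω`. -/
def PosDefQ (Ω : Set X) : Prop := ∀ x ∈ Ω, ∀ u : Y, u ≠ 0 → 0 < r.Q x u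

/-- Assumption (A): `H` is `Q^{1/2}(x,·)`-dense in `Y`. -/
def AssumpA (Ω : Set X) : Prop :=
  ∀ x ∈ Ω, ∀ u : Y, ∀ ε > (0:ℝ), ∃ v ∈ r.H, r.Q x (u - v) < ε

/-- Assumption (B): near each point of `Ω`, `θ` is positive and bounded, and
`N(x',·) = (G(x',·) + θ(x')·Q(x',·))^{1/2}` is a Hilbert norm on `H` (positive definite
and sequentially complete). -/
def AssumpB (Ω : Set X) : Prop :=
  ∀ x ∈ Ω, ∃ V ∈ 𝓝 x, V ⊆ Ω ∧ (∃ C : ℝ, ∀ x' ∈ V, 0 < r.θ x' ∧ r.θ x' ≤ C) ∧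
    ∀ x' ∈ V,
      (∀ v : r.H, v ≠ 0 → 0 < r.G x' v + r.θ x' * r.Q x' ↑v) ∧
      (∀ u : ℕ → r.H,
        (∀ ε > (0:ℝ), ∃ M : ℕ, ∀ i ≥ M, ∀ j ≥ M, r.N x' (u i - u j) < ε) →
        ∃ l : r.H, Tendsto (fun n => r.N x' (u n - l)) atTop (𝓝 0))

/-- Assumption (C): local uniform equivalence of the norms `N(x',·)`. -/
def AssumpC (Ω : Set X) : Prop :=
  ∀ x ∈ Ω, ∃ C : ℝ, 1 ≤ C ∧ ∃ V ∈ 𝓝 x, ∀ x' ∈ V, ∀ v : r.H,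
    C⁻¹ * r.N x' v ≤ r.N x v ∧ r.N x v ≤ C * r.N x' v

/-- Assumption (D): compactness.  If `x_n → x` and `(u_n) ⊆ H` is `N`-bounded, then along
a subsequence `Q(x_n, u_n − u) → 0` and `Γ(x_n,u_n,v) → Γ(x,u,v)` for all `v ∈ H`. -/
def AssumpD (Ω : Set X) : Prop :=
  ∀ x ∈ Ω, ∀ xs : ℕ → X, Tendsto xs atTop (𝓝 x) →
    ∀ us : ℕ → r.H, (∃ C : ℝ, ∀ n, r.N (xs n) (us n) ≤ C) →
    ∃ u : r.H, ∃ φ : ℕ → ℕ, StrictMono φ ∧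
      Tendsto (fun n => r.Q (xs (φ n)) ((us (φ n) : Y) - ↑u)) atTop (𝓝 0) ∧
      ∀ v : r.H, Tendsto (fun n => r.Γ (xs (φ n)) (us (φ n)) v) atTop (𝓝 (r.Γ x u v))

/-- Assumption (E): Fréchet differentiability of `x ↦ Q(x,u)` and `x ↦ G(x,v)` (stated
for the polarized forms) with derivatives `Bx`, `Γx`. -/
def AssumpE (Ω : Set X) : Prop :=
  (∀ u v : Y, ∀ x ∈ Ω, HasFDerivAt (fun x' => r.B x' u v) (r.Bx x u v) x) ∧
  (∀ u v : r.H, ∀ x ∈ Ω, HasFDerivAt (fun x' => r.Γ x' u v) (r.Γx x u v) x)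

/-- Assumption (F): sequential continuity of `Q, Q_x` and `G, G_x`. -/
def AssumpF (Ω : Set X) : Prop :=
  ∀ x ∈ Ω, ∀ xs : ℕ → X, Tendsto xs atTop (𝓝 x) →
    (∀ (us : ℕ → Y) (u : Y),
      Tendsto (fun n => r.Q (xs n) (us n - u)) atTop (𝓝 0) →
      Tendsto (fun n => r.Q (xs n) (us n)) atTop (𝓝 (r.Q x u)) ∧
      Tendsto (fun n => r.Qx (xs n) (us n)) atTop (𝓝 (r.Qx x u))) ∧
    (∀ (vs : ℕ → r.H) (v : r.H),
      Tendsto (fun n => r.N (xs n) (vs n - v)) atTop (𝓝 0) →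
      Tendsto (fun n => r.G (xs n) (vs n)) atTop (𝓝 (r.G x v)) ∧
      Tendsto (fun n => r.Gx (xs n) (vs n)) atTop (𝓝 (r.Gx x v)))

/-- Assumption (G): local bounds on the derivative bilinear forms in terms of `N`. -/
def AssumpG (Ω : Set X) : Prop :=
  ∀ x ∈ Ω, ∃ C₀ > (0:ℝ), ∃ V ∈ 𝓝 x, ∀ x' ∈ V, ∀ v₁ v₂ : r.H,
    ‖r.Bx x' ↑v₁ ↑v₂‖ ≤ C₀ * r.N x' v₁ * r.N x' v₂ ∧
    ‖r.Γx x' v₁ v₂‖ ≤ C₀ * r.N x' v₁ * r.N x' v₂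

/-- The eigenspace `E_k(x) = {u ∈ H : Γ(x,u,v) = λ_k(x)·B(x,u,v) for all v ∈ H}`. -/
def eigSpace (k : ℕ) (x : X) : Set r.H :=
  {u : r.H | ∀ v : r.H, r.Γ x u v = r.eig k x * r.B x ↑u ↑v}

/-- `j_k(x) = min{j ≥ 1 : λ_j(x) = λ_k(x)}`. -/
noncomputable def jIdx (k : ℕ) (x : X) : ℕ :=
  sInf {j : ℕ | 1 ≤ j ∧ r.eig j x = r.eig k x}

/-- `p_k(x) = k − j_k(x) + 1`. -/
noncomputable def pIdx (k : ℕ) (x : X) : ℕ := k - r.jIdx k x + 1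

/-- `m_k(x) = card{j ≥ 1 : λ_j(x) = λ_k(x)}`. -/
noncomputable def mIdx (k : ℕ) (x : X) : ℕ :=
  Set.ncard {j : ℕ | 1 ≤ j ∧ r.eig j x = r.eig k x}

end RayleighData

set_option maxHeartbeats 1600000 in
set_option synthInstance.maxHeartbeats 400000 in
/-- Under the standing assumptions (B), (C), (E), (F), (G) on the Rayleigh quotient setting,
for every integer `k ≥ 1` the eigenvalue function `λ_k` is upper semicontinuous on `Ω`. -/
theorem eig_upperSemicontinuousOn
    {X Y : Type*} [NormedAddCommGroup X] [NormedSpace ℝ X] [CompleteSpace X]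
    [AddCommGroup Y] [Module ℝ Y]
    (Ω : Set X) (hΩ : IsOpen Ω) (r : RayleighData X Y)
    (hBsymm : r.SymmB) (hΓsymm : r.SymmΓ) (hpos : r.PosDefQ Ω)
    (hinf : ¬ FiniteDimensional ℝ r.H)
    (hB : r.AssumpB Ω) (hC : r.AssumpC Ω) (hE : r.AssumpE Ω)
    (hF : r.AssumpF Ω) (hG : r.AssumpG Ω)
    (k : ℕ) (hk : 1 ≤ k) :
    UpperSemicontinuousOn (r.eig k) Ω := by
  classical
  intro x₀ hx₀ y hy
  -- a k-dimensional subspace exists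
  have hrank : (k : Cardinal) ≤ Module.rank ℝ r.H := by
    have hale : Cardinal.aleph0 ≤ Module.rank ℝ r.H := by
      by_contra h
      push_neg at h
      exact hinf (Module.rank_lt_aleph0_iff.mp h)
    exact le_trans (Cardinal.nat_lt_aleph0 k).le hale
  obtain ⟨f, hf⟩ := exists_linearIndependent_of_le_rank hrank
  have hfinE : Module.finrank ℝ (Submodule.span ℝ (Set.range f)) = k := by
    rw [finrank_span_eq_card hf, Fintype.card_fin]
  haveI hneI : Nonempty {E : Submodule ℝ r.H // Module.finrank ℝ E = k} := ⟨⟨_, hfinE⟩⟩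
  -- every index subspace contains a nonzero vector
  have hnz : ∀ E : {E : Submodule ℝ r.H // Module.finrank ℝ E = k},
      ∃ u : r.H, u ∈ E.1 ∧ u ≠ 0 := by
    intro E
    have : Nontrivial E.1 := Module.nontrivial_of_finrank_pos (R := ℝ)
      (by rw [E.2]; omega)
    obtain ⟨v, hv⟩ := exists_ne (0 : E.1)
    exact ⟨↑v, v.2, fun h => hv (Subtype.ext h)⟩
  -- lower bound -θ(x) for all the suprema
  have hlow : ∀ x ∈ Ω, ∀ E : {E : Submodule ℝ r.H // Module.finrank ℝ E = k},
      -r.θ x ≤ ⨆ u : {u : r.H // u ∈ E.1 ∧ u ≠ 0}, r.R x u.1 := by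
    intro x hx E
    obtain ⟨V, hV, hVΩ, ⟨Cθ, hθ⟩, hN⟩ := hB x hx
    have hxV : x ∈ V := mem_of_mem_nhds hV
    have hθx : 0 < r.θ x := (hθ x hxV).1
    obtain ⟨u₀, hu₀E, hu₀0⟩ := hnz E
    haveI : Nonempty {u : r.H // u ∈ E.1 ∧ u ≠ 0} := ⟨⟨u₀, hu₀E, hu₀0⟩⟩
    by_cases hbdd : BddAbove (Set.range fun u : {u : r.H // u ∈ E.1 ∧ u ≠ 0} => r.R x u.1)
    · have hb : 0 < r.Q x ↑u₀ := hpos x hx ↑u₀ (fun h => hu₀0 (by exact_mod_cast Subtype.ext h))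
      have hn2 : 0 < r.G x u₀ + r.θ x * r.Q x ↑u₀ := ((hN x hxV).1) u₀ hu₀0
      have hR : -r.θ x ≤ r.R x u₀ := by
        rw [RayleighData.R, le_div_iff₀ hb]
        nlinarith
      exact hR.trans (le_ciSup hbdd ⟨u₀, hu₀E, hu₀0⟩)
    · rw [Real.iSup_of_not_bddAbove hbdd]
      linarith
  -- choose E₀ with supremum close to the infimum
  obtain ⟨E₀, hE₀⟩ : ∃ E : {E : Submodule ℝ r.H // Module.finrank ℝ E = k},
      (⨆ u : {u : r.H // u ∈ E.1 ∧ u ≠ 0}, r.R x₀ u.1) < y := exists_lt_of_ciInf_lt hy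
  set f₀ : ℝ := ⨆ u : {u : r.H // u ∈ E₀.1 ∧ u ≠ 0}, r.R x₀ u.1 with hf₀def
  set ε : ℝ := (y - f₀) / 2 with hεdef
  have hε : 0 < ε := by simp only [hεdef]; linarith
  -- constants from the assumptions at x₀
  obtain ⟨V_B, hVB, hVBΩ, ⟨Cθ, hθb⟩, hNp⟩ := hB x₀ hx₀
  have hx₀VB : x₀ ∈ V_B := mem_of_mem_nhds hVB
  set θ₀ : ℝ := r.θ x₀ with hθ₀def
  have hθ₀ : 0 < θ₀ := (hθb x₀ hx₀VB).1
  obtain ⟨C, hC1, V_C, hVC, hCe⟩ := hC x₀ hx₀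
  have hCpos : 0 < C := lt_of_lt_of_le zero_lt_one hC1
  obtain ⟨C₀, hC₀, V_G, hVG, hGe⟩ := hG x₀ hx₀
  obtain ⟨ρ, hρ, hballsub⟩ := Metric.mem_nhds_iff.mp (inter_mem (inter_mem hVB hVC) hVG)
  set S := Metric.ball x₀ ρ with hSdef
  have hSB : S ⊆ V_B := fun z hz => ((hballsub hz).1).1
  have hSC : S ⊆ V_C := fun z hz => ((hballsub hz).1).2
  have hSG : S ⊆ V_G := fun z hz => (hballsub hz).2
  have hSΩ : S ⊆ Ω := fun z hz => hVBΩ (hSB hz)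
  have hx₀S : x₀ ∈ S := Metric.mem_ball_self hρ
  -- the shifted quadratic form n2 at x₀
  set n2 : r.H → ℝ := fun u => r.G x₀ u + θ₀ * r.Q x₀ ↑u with hn2def
  have hn2pos : ∀ u : r.H, u ≠ 0 → 0 < n2 u := fun u hu => (hNp x₀ hx₀VB).1 u hu
  have hNsq : ∀ u : r.H, (r.N x₀ u) ^ 2 = n2 u := by
    intro u
    rcases eq_or_ne u 0 with rfl | hu
    · simp [RayleighData.N, RayleighData.G, RayleighData.Q, hn2def, hθ₀def, Real.sq_sqrt]
    · exact Real.sq_sqrt (hn2pos u hu).le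
  set K : ℝ := C₀ * C ^ 2 with hKdef
  have hKpos : 0 < K := by positivity
  -- mean value bounds for G and Q along the ball S
  have hNle : ∀ z ∈ S, ∀ u : r.H, r.N z u ≤ C * r.N x₀ u := by
    intro z hz u
    have h := (hCe z (hSC hz) u).1
    have h2 := mul_le_mul_of_nonneg_left h hCpos.le
    rwa [← mul_assoc, mul_inv_cancel₀ hCpos.ne', one_mul] at h2
  have hderiv_bound : ∀ z ∈ S, ∀ u : r.H,
      C₀ * r.N z u * r.N z u ≤ K * n2 u := by
    intro z hz u
    have h2 := hNle z hz u
    have hN0 : 0 ≤ r.N x₀ u := Real.sqrt_nonneg _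
    have hNz : 0 ≤ r.N z u := Real.sqrt_nonneg _
    have : C₀ * r.N z u * r.N z u ≤ C₀ * (C * r.N x₀ u) * (C * r.N x₀ u) := by
      nlinarith [mul_le_mul h2 h2 hNz (by positivity : (0:ℝ) ≤ C * r.N x₀ u)]
    calc C₀ * r.N z u * r.N z u ≤ C₀ * (C * r.N x₀ u) * (C * r.N x₀ u) := this
      _ = K * (r.N x₀ u) ^ 2 := by rw [hKdef]; ring
      _ = K * n2 u := by rw [hNsq]
  have hdG : ∀ u : r.H, ∀ x' ∈ S, |r.G x' u - r.G x₀ u| ≤ K * n2 u * ‖x' - x₀‖ := by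
    intro u x' hx'
    refine mvt_bound (f := fun z => r.G z u) (f' := fun z => r.Γx z u u) (convex_ball x₀ ρ) ?_ ?_ hx₀S hx'
    · intro z hz
      exact hE.2 u u z (hSΩ hz)
    · intro z hz
      exact ((hGe z (hSG hz) u u).2).trans (hderiv_bound z hz u)
  have hdQ : ∀ u : r.H, ∀ x' ∈ S, |r.Q x' ↑u - r.Q x₀ ↑u| ≤ K * n2 u * ‖x' - x₀‖ := by
    intro u x' hx'
    refine mvt_bound (f := fun z => r.Q z ↑u) (f' := fun z => r.Bx z ↑u ↑u) (convex_ball x₀ ρ) ?_ ?_ hx₀S hx'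
    · intro z hz
      exact hE.1 ↑u ↑u z (hSΩ hz)
    · intro z hz
      exact ((hGe z (hSG hz) u u).1).trans (hderiv_bound z hz u)
  -- finite-dimensional comparison on E₀
  haveI : Module.Finite ℝ E₀.1 := Module.finite_of_finrank_pos (by rw [E₀.2]; omega)
  obtain ⟨M, hM1, hMb⟩ : ∃ M : ℝ, 1 ≤ M ∧
      ∀ u : r.H, u ∈ E₀.1 → n2 u ≤ M * r.Q x₀ ↑u := by
    set n := Module.finrank ℝ E₀.1 with hndef
    have hn : 0 < n := by rw [hndef, E₀.2]; omega
    set b := Module.finBasis ℝ E₀.1 with hbdef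
    set φ : (Fin n → ℝ) ≃ₗ[ℝ] E₀.1 := b.equivFun.symm with hφdef
    set j : E₀.1 →ₗ[ℝ] Y := r.H.subtype ∘ₗ (E₀.1).subtype with hjdef
    set qF : (Fin n → ℝ) →ₗ[ℝ] (Fin n → ℝ) →ₗ[ℝ] ℝ :=
      (r.B x₀).compl₁₂ (j ∘ₗ φ.toLinearMap) (j ∘ₗ φ.toLinearMap) with hqFdef
    set gF : (Fin n → ℝ) →ₗ[ℝ] (Fin n → ℝ) →ₗ[ℝ] ℝ :=
      (r.Γ x₀).compl₁₂ ((E₀.1).subtype ∘ₗ φ.toLinearMap) ((E₀.1).subtype ∘ₗ φ.toLinearMap)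
      with hgFdef
    set g2 : (Fin n → ℝ) →ₗ[ℝ] (Fin n → ℝ) →ₗ[ℝ] ℝ := gF + θ₀ • qF with hg2def
    have hqFv : ∀ c, qF c c = r.Q x₀ ↑↑(φ c) := fun c => rfl
    have hgFv : ∀ c, gF c c = r.G x₀ ↑(φ c) := fun c => rfl
    have hg2v : ∀ c, g2 c c = n2 ↑(φ c) := by
      intro c
      simp only [hg2def, LinearMap.add_apply, LinearMap.smul_apply, smul_eq_mul, hn2def]
      rw [hqFv, hgFv]
    have hqpos : ∀ c : Fin n → ℝ, c ≠ 0 → 0 < qF c c := by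
      intro c hc
      have hφc : φ c ≠ 0 := fun h => hc (by simpa using φ.map_eq_zero_iff.mp h)
      have hYne : ((↑(φ c) : r.H) : Y) ≠ 0 := by
        intro h
        exact hφc (Subtype.ext (Subtype.ext h))
      rw [hqFv]
      exact hpos x₀ hx₀ _ hYne
    obtain ⟨M, hM1, hMle⟩ := exists_bound_of_posdef hn qF g2 hqpos
    refine ⟨M, hM1, fun u hu => ?_⟩
    have h := hMle (φ.symm ⟨u, hu⟩)
    rw [hg2v, hqFv, φ.apply_symm_apply] at h
    exact h
  -- bound R x₀ on E₀ and hence the supremum data at x₀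
  have hRM : ∀ u : r.H, u ∈ E₀.1 → u ≠ 0 → r.R x₀ u ≤ M := by
    intro u hu hu0
    have hb₀ : 0 < r.Q x₀ ↑u := hpos x₀ hx₀ ↑u (fun h => hu0 (Subtype.ext h))
    have h := hMb u hu
    rw [RayleighData.R, div_le_iff₀ hb₀]
    simp only [hn2def] at h
    nlinarith
  obtain ⟨u₀, hu₀E, hu₀0⟩ := hnz E₀
  haveI hneu : Nonempty {u : r.H // u ∈ E₀.1 ∧ u ≠ 0} := ⟨⟨u₀, hu₀E, hu₀0⟩⟩
  have hbdd₀ : BddAbove (Set.range fun u : {u : r.H // u ∈ E₀.1 ∧ u ≠ 0} => r.R x₀ u.1) := by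
    refine ⟨M, ?_⟩
    rintro v ⟨u, rfl⟩
    exact hRM u.1 u.2.1 u.2.2
  have hle₀ : ∀ u : {u : r.H // u ∈ E₀.1 ∧ u ≠ 0}, r.R x₀ u.1 ≤ f₀ :=
    fun u => le_ciSup hbdd₀ u
  -- the final radius
  set κ : ℝ := 2 * K * M * (1 + M + θ₀) with hκdef
  have hκ : 0 < κ := by
    have : (0:ℝ) < 1 + M + θ₀ := by linarith
    positivity
  set ρ₁ : ℝ := min ρ (min ((2 * K * M)⁻¹) (ε / κ)) with hρ₁def
  have hρ₁ : 0 < ρ₁ := by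
    refine lt_min hρ (lt_min ?_ ?_)
    · positivity
    · positivity
  -- the key uniform estimate
  have key : ∀ x' ∈ Metric.ball x₀ ρ₁, ∀ u : r.H, u ∈ E₀.1 → u ≠ 0 →
      r.R x' u ≤ r.R x₀ u + ε := by
    intro x' hx' u hu hu0
    have hx'S : x' ∈ S := Metric.ball_subset_ball (min_le_left _ _) hx'
    have ht : ‖x' - x₀‖ < ρ₁ := mem_ball_iff_norm.mp hx'
    set t : ℝ := ‖x' - x₀‖ with htdef
    have ht0 : 0 ≤ t := norm_nonneg _
    have htA : K * M * t ≤ 1 / 2 := by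
      have h1 : t ≤ (2 * K * M)⁻¹ := le_trans ht.le (le_trans (min_le_right _ _) (min_le_left _ _))
      have h2 : 0 < 2 * K * M := by positivity
      calc K * M * t ≤ K * M * (2 * K * M)⁻¹ := by
            apply mul_le_mul_of_nonneg_left h1 (by positivity)
        _ = 1 / 2 := by field_simp
    have htB : K * M * (1 + M + θ₀) * t ≤ ε / 2 := by
      have h1 : t ≤ ε / κ := le_trans ht.le (le_trans (min_le_right _ _) (min_le_right _ _))
      have h2 : 0 ≤ K * M * (1 + M + θ₀) := by nlinarith
      calc K * M * (1 + M + θ₀) * t ≤ K * M * (1 + M + θ₀) * (ε / κ) :=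
            mul_le_mul_of_nonneg_left h1 h2
        _ = ε / 2 := by rw [hκdef]; field_simp
    have h1 := hdG u x' hx'S
    have h3 := hdQ u x' hx'S
    have h5 := hMb u hu
    have h6 : 0 < n2 u := hn2pos u hu0
    have h9 : 0 < r.Q x₀ ↑u := hpos x₀ hx₀ ↑u (fun h => hu0 (Subtype.ext h))
    set a : ℝ := r.G x' u with hadef
    set a₀ : ℝ := r.G x₀ u with ha₀def
    set bq : ℝ := r.Q x' ↑u with hbdef
    set b₀ : ℝ := r.Q x₀ ↑u with hb₀def
    have ha₀n : a₀ = n2 u - θ₀ * b₀ := by simp [hn2def, ha₀def, hb₀def]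
    have h10 : b₀ / 2 ≤ bq := by
      have hd1 : b₀ - bq ≤ K * n2 u * t := by
        have := (abs_le.mp h3).1
        linarith
      nlinarith
    have hb : 0 < bq := by linarith
    have c1 : a - a₀ ≤ K * n2 u * t := (le_abs_self _).trans h1
    have c2 : |a₀| ≤ (M + θ₀) * b₀ := by
      rw [abs_le]
      constructor <;> nlinarith
    have c3 : |b₀ - bq| ≤ K * n2 u * t := by rw [abs_sub_comm]; exact h3
    have c4 : a₀ * (b₀ - bq) ≤ (M + θ₀) * b₀ * (K * n2 u * t) := by
      calc a₀ * (b₀ - bq) ≤ |a₀ * (b₀ - bq)| := le_abs_self _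
        _ = |a₀| * |b₀ - bq| := abs_mul _ _
        _ ≤ (M + θ₀) * b₀ * (K * n2 u * t) := by
            apply mul_le_mul c2 c3 (abs_nonneg _)
            nlinarith
    have hnum : a * b₀ - a₀ * bq ≤ K * M * (1 + M + θ₀) * t * b₀ ^ 2 := by
      have e1 : (a - a₀) * b₀ ≤ (K * n2 u * t) * b₀ :=
        mul_le_mul_of_nonneg_right c1 h9.le
      have e2 : K * n2 u * t ≤ K * (M * b₀) * t := by
        nlinarith [mul_le_mul_of_nonneg_left (mul_le_mul_of_nonneg_right h5 ht0) hKpos.le]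
      nlinarith [mul_le_mul_of_nonneg_right e2 h9.le,
        mul_le_mul_of_nonneg_right e2 (by nlinarith : (0:ℝ) ≤ (M + θ₀) * b₀)]
    have hgoal : a * b₀ ≤ (a₀ + ε * b₀) * bq := by
      nlinarith [mul_le_mul_of_nonneg_right htB (sq_nonneg b₀),
        mul_le_mul_of_nonneg_left h10 (mul_nonneg hε.le h9.le)]
    show r.G x' u / r.Q x' ↑u ≤ r.G x₀ u / r.Q x₀ ↑u + ε
    rw [← hadef, ← ha₀def, ← hbdef, ← hb₀def, div_add' _ _ _ h9.ne', div_le_div_iff₀ hb h9]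
    exact hgoal
  -- conclude
  have hball : Metric.ball x₀ ρ₁ ∈ 𝓝 x₀ := Metric.ball_mem_nhds _ hρ₁
  filter_upwards [nhdsWithin_le_nhds hball, self_mem_nhdsWithin] with x' hx'b hx'Ω
  have hsup' : (⨆ u : {u : r.H // u ∈ E₀.1 ∧ u ≠ 0}, r.R x' u.1) ≤ f₀ + ε := by
    refine ciSup_le fun u => ?_
    calc r.R x' u.1 ≤ r.R x₀ u.1 + ε := key x' hx'b u.1 u.2.1 u.2.2
      _ ≤ f₀ + ε := by linarith [hle₀ u]
  have hBdd : BddBelow (Set.range fun E : {E : Submodule ℝ r.H // Module.finrank ℝ E = k} =>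
      ⨆ u : {u : r.H // u ∈ E.1 ∧ u ≠ 0}, r.R x' u.1) := by
    refine ⟨-r.θ x', ?_⟩
    rintro v ⟨E, rfl⟩
    exact hlow x' hx'Ω E
  have hle : r.eig k x' ≤ ⨆ u : {u : r.H // u ∈ E₀.1 ∧ u ≠ 0}, r.R x' u.1 :=
    ciInf_le hBdd E₀
  calc r.eig k x' ≤ f₀ + ε := hle.trans hsup'
    _ < y := by simp only [hεdef]; linarith
end

section
/- Under the standing assumptions (B), (C), (E), (F), (G) on the Rayleigh quotient setting, for every integer k ≥ 1 the eigenvalue function λ_k : Ω → ℝ is locally Lipschitz on Ω. -/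
open Filter Topology Set

lemma exists_ratio_bound_of_posDef {V : Type*} [AddCommGroup V] [Module ℝ V]
    [FiniteDimensional ℝ V] (b g : V →ₗ[ℝ] V →ₗ[ℝ] ℝ)
    (hsymm : ∀ v w, b v w = b w v) (hpos : ∀ v : V, v ≠ 0 → 0 < b v v) :
    ∃ CE : ℝ, ∀ v : V, g v v ≤ CE * b v v := by
  classical
  rcases subsingleton_or_nontrivial V with hV | hV
  · refine ⟨0, fun v => ?_⟩
    have hv0 : v = 0 := Subsingleton.elim v 0
    simp [hv0]
  letI cd : InnerProductSpace.Core ℝ V :=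
  { inner := fun v w => b v w
    conj_inner_symm := fun v w => by simpa [starRingEnd_apply] using hsymm w v
    re_inner_nonneg := fun v => by
      by_cases h : v = 0
      · simp [h]
      · simpa using (hpos v h).le
    add_left := fun v w z => by simp
    smul_left := fun v w c => by simp [starRingEnd_apply]
    definite := fun v hv => by
      by_contra h
      exact (hpos v h).ne' (by simpa using hv) }
  letI : NormedAddCommGroup V := cd.toNormedAddCommGroup
  letI : InnerProductSpace ℝ V := InnerProductSpace.ofCore cd.toCore
  have hnorm : ∀ v : V, ‖v‖ ^ 2 = b v v := by
    intro v
    rw [← real_inner_self_eq_norm_sq]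
    rfl
  -- continuity of `v ↦ g v v`
  let bb := Module.finBasis ℝ V
  have hrepr : ∀ v : V, g v v = ∑ i, bb.repr v i * ∑ j, bb.repr v j * g (bb j) (bb i) := by
    intro v
    conv_lhs => rw [← bb.sum_repr v]
    simp [map_sum, map_smul, Finset.sum_apply, smul_eq_mul, -Module.Basis.sum_repr]
  have hgc : Continuous fun v : V => g v v := by
    have h : (fun v : V => g v v)
        = fun v => ∑ i, bb.coord i v * ∑ j, bb.coord j v * g (bb j) (bb i) := by
      funext v
      simpa [Module.Basis.coord_apply] using hrepr v
    rw [h]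
    refine continuous_finset_sum _ fun i _ => Continuous.mul
      (bb.coord i).continuous_of_finiteDimensional ?_
    exact continuous_finset_sum _ fun j _ => Continuous.mul
      (bb.coord j).continuous_of_finiteDimensional continuous_const
  have hcomp : IsCompact (Metric.sphere (0 : V) 1) := isCompact_sphere 0 1
  have hne : (Metric.sphere (0 : V) 1).Nonempty := NormedSpace.sphere_nonempty.2 zero_le_one
  obtain ⟨w, hw, hmax⟩ := hcomp.exists_isMaxOn hne hgc.continuousOn
  refine ⟨g w w, fun v => ?_⟩
  by_cases hv : v = 0
  · simp [hv]
  · have hvn : ‖v‖ ≠ 0 := norm_ne_zero_iff.2 hv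
    set w' : V := ‖v‖⁻¹ • v with hw'
    have hw'mem : w' ∈ Metric.sphere (0 : V) 1 := by
      simp [hw', norm_smul, abs_of_nonneg (norm_nonneg v), inv_mul_cancel₀ hvn]
    have hvw : v = ‖v‖ • w' := by
      rw [hw', smul_smul, mul_inv_cancel₀ hvn, one_smul]
    have hsq : ∀ (a : ℝ) (z : V), g (a • z) (a • z) = a ^ 2 * g z z := by
      intro a z
      simp [map_smul, smul_eq_mul]
      ring
    have h1 : g v v = ‖v‖ ^ 2 * g w' w' := by
      conv_lhs => rw [hvw]
      rw [hsq]
    have h2 : g w' w' ≤ g w w := hmax hw'mem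
    have h3 : g v v ≤ ‖v‖ ^ 2 * g w w := by
      rw [h1]
      exact mul_le_mul_of_nonneg_left h2 (by positivity)
    calc g v v ≤ ‖v‖ ^ 2 * g w w := h3
    _ = g w w * b v v := by rw [hnorm]; ring

set_option maxHeartbeats 1600000

/-- Under the standing assumptions (B), (C), (E), (F), (G) on the Rayleigh quotient setting,
for every integer `k ≥ 1` the eigenvalue function `λ_k` is locally Lipschitz on `Ω`. -/
theorem eig_locallyLipschitzOn
    {X Y : Type*} [NormedAddCommGroup X] [NormedSpace ℝ X] [CompleteSpace X]
    [AddCommGroup Y] [Module ℝ Y]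
    (Ω : Set X) (hΩ : IsOpen Ω) (r : RayleighData X Y)
    (hBsymm : r.SymmB) (hΓsymm : r.SymmΓ) (hpos : r.PosDefQ Ω)
    (hinf : ¬ FiniteDimensional ℝ r.H)
    (hB : r.AssumpB Ω) (hC : r.AssumpC Ω) (hE : r.AssumpE Ω)
    (hF : r.AssumpF Ω) (hG : r.AssumpG Ω)
    (k : ℕ) (hk : 1 ≤ k) :
    ∀ x ∈ Ω, ∃ K : NNReal, ∃ V ∈ 𝓝 x, LipschitzOnWith K (r.eig k) (V ∩ Ω) := by
  classical
  intro x₀ hx₀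
  obtain ⟨VB, hVBmem, hVBsub, ⟨Cθ, hCθ⟩, hNB⟩ := hB x₀ hx₀
  obtain ⟨C, hC1, VC, hVCmem, hCin⟩ := hC x₀ hx₀
  obtain ⟨C₀, hC₀, VG, hVGmem, hGin⟩ := hG x₀ hx₀
  have hΩmem : Ω ∈ 𝓝 x₀ := hΩ.mem_nhds hx₀
  obtain ⟨ρ₁, hρ₁, hball⟩ := Metric.mem_nhds_iff.1
    (Filter.inter_mem (Filter.inter_mem (Filter.inter_mem hVBmem hVCmem) hVGmem) hΩmem)
  set s : Set X := Metric.ball x₀ ρ₁ with hs_def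
  have hx₀s : x₀ ∈ s := Metric.mem_ball_self hρ₁
  have hsB : ∀ z ∈ s, z ∈ VB := fun z hz => (hball hz).1.1.1
  have hsC : ∀ z ∈ s, z ∈ VC := fun z hz => (hball hz).1.1.2
  have hsG : ∀ z ∈ s, z ∈ VG := fun z hz => (hball hz).1.2
  have hsΩ : ∀ z ∈ s, z ∈ Ω := fun z hz => (hball hz).2
  have hθs : ∀ z ∈ s, 0 < r.θ z ∧ r.θ z ≤ Cθ := fun z hz => hCθ z (hsB z hz)
  have hCθ0 : 0 < Cθ := lt_of_lt_of_le (hθs x₀ hx₀s).1 (hθs x₀ hx₀s).2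
  set θ₀ : ℝ := Cθ + 1 with hθ₀_def
  clear_value θ₀
  have hθ₀1 : 1 ≤ θ₀ := by rw [hθ₀_def]; linarith
  have hθ₀pos : 0 < θ₀ := by linarith
  have hCpos : (0:ℝ) < C := lt_of_lt_of_le one_pos hC1
  set m : X → r.H → ℝ := fun z u => r.G z u + θ₀ * r.Q z ↑u with hm_def
  clear_value m
  -- positivity facts
  have hQ0 : ∀ z ∈ s, ∀ u : r.H, 0 ≤ r.Q z (↑u : Y) := by
    intro z hz u
    rcases eq_or_ne u 0 with h | h
    · simp [h, RayleighData.Q]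
    · exact (hpos z (hsΩ z hz) ↑u (fun hc => h (ZeroMemClass.coe_eq_zero.mp hc))).le
  have hQpos : ∀ z ∈ s, ∀ u : r.H, u ≠ 0 → 0 < r.Q z (↑u : Y) :=
    fun z hz u hu => hpos z (hsΩ z hz) ↑u (fun hc => hu (ZeroMemClass.coe_eq_zero.mp hc))
  have hNsq : ∀ z ∈ s, ∀ u : r.H, 0 ≤ r.G z u + r.θ z * r.Q z ↑u := by
    intro z hz u
    rcases eq_or_ne u 0 with h | h
    · simp [h, RayleighData.G, RayleighData.Q]
    · exact ((hNB z (hsB z hz)).1 u h).le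
  have hNval : ∀ z ∈ s, ∀ u : r.H, r.N z u * r.N z u = r.G z u + r.θ z * r.Q z ↑u :=
    fun z hz u => Real.mul_self_sqrt (hNsq z hz u)
  have hmQ : ∀ z ∈ s, ∀ u : r.H, r.Q z ↑u ≤ m z u := by
    intro z hz u
    have h1 := hNsq z hz u
    have h2 := (hθs z hz).2
    have h3 := hQ0 z hz u
    simp only [hm_def]
    nlinarith
  have hm0 : ∀ z ∈ s, ∀ u : r.H, 0 ≤ m z u :=
    fun z hz u => le_trans (hQ0 z hz u) (hmQ z hz u)
  have hNm : ∀ z ∈ s, ∀ u : r.H, r.N z u * r.N z u ≤ m z u := by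
    intro z hz u
    rw [hNval z hz u]
    have h2 := (hθs z hz).2
    have h3 := hQ0 z hz u
    simp only [hm_def]
    nlinarith
  -- comparison of norms on s
  have hNcomp : ∀ z ∈ s, ∀ x ∈ s, ∀ u : r.H, r.N z u ≤ C^2 * r.N x u := by
    intro z hz x hx u
    have h1 := (hCin z (hsC z hz) u).1
    have h2 := (hCin x (hsC x hx) u).2
    have h3 : r.N z u ≤ C * r.N x₀ u := by
      have h4 := mul_le_mul_of_nonneg_left h1 hCpos.le
      rwa [mul_inv_cancel_left₀ hCpos.ne'] at h4
    calc r.N z u ≤ C * r.N x₀ u := h3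
    _ ≤ C * (C * r.N x u) := mul_le_mul_of_nonneg_left h2 hCpos.le
    _ = C^2 * r.N x u := by ring
  set K₁ : ℝ := C₀ * C^4 with hK₁_def
  clear_value K₁
  have hK₁0 : 0 < K₁ := by rw [hK₁_def]; exact mul_pos hC₀ (by positivity)
  -- differential (mean-value) bounds
  have hDG : ∀ u : r.H, ∀ x ∈ s, ∀ x' ∈ s,
      |r.G x' u - r.G x u| ≤ K₁ * m x u * ‖x' - x‖ ∧
      |r.Q x' ↑u - r.Q x ↑u| ≤ K₁ * m x u * ‖x' - x‖ := by
    intro u x hx x' hx'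
    have hNz0 : ∀ z : X, 0 ≤ r.N z u := fun z => Real.sqrt_nonneg _
    have hsq : ∀ z ∈ s, r.N z u * r.N z u ≤ C^4 * m x u := by
      intro z hz
      have h1 := hNcomp z hz x hx u
      have h5 := mul_le_mul_of_nonneg_left (hNm x hx u) (by positivity : (0:ℝ) ≤ C^4)
      nlinarith [mul_self_le_mul_self (hNz0 z) h1]
    have hGbd : ∀ z ∈ s, ‖r.Γx z u u‖ ≤ K₁ * m x u := by
      intro z hz
      have h6 := (hGin z (hsG z hz) u u).2
      have h7 := mul_le_mul_of_nonneg_left (hsq z hz) hC₀.le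
      rw [hK₁_def]
      nlinarith
    have hBbd : ∀ z ∈ s, ‖r.Bx z (↑u : Y) ↑u‖ ≤ K₁ * m x u := by
      intro z hz
      have h6 := (hGin z (hsG z hz) u u).1
      have h7 := mul_le_mul_of_nonneg_left (hsq z hz) hC₀.le
      rw [hK₁_def]
      nlinarith
    constructor
    · have h8 := (convex_ball x₀ ρ₁).norm_image_sub_le_of_norm_hasFDerivWithin_le
        (f := fun z => r.G z u) (f' := fun z => r.Γx z u u)
        (fun z hz => (hE.2 u u z (hsΩ z hz)).hasFDerivWithinAt)
        (fun z hz => hGbd z hz) hx hx'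
      rwa [Real.norm_eq_abs] at h8
    · have h8 := (convex_ball x₀ ρ₁).norm_image_sub_le_of_norm_hasFDerivWithin_le
        (f := fun z => r.Q z ↑u) (f' := fun z => r.Bx z (↑u : Y) ↑u)
        (fun z hz => (hE.1 ↑u ↑u z (hsΩ z hz)).hasFDerivWithinAt)
        (fun z hz => hBbd z hz) hx hx'
      rwa [Real.norm_eq_abs] at h8
  set L : ℝ := (1 + θ₀) * K₁ with hL_def
  clear_value L
  have hL0 : 0 < L := by rw [hL_def]; nlinarith
  have hDm : ∀ u : r.H, ∀ x ∈ s, ∀ x' ∈ s,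
      |m x' u - m x u| ≤ L * ‖x' - x‖ * m x u ∧
      |r.Q x' ↑u - r.Q x ↑u| ≤ L * ‖x' - x‖ * m x u := by
    intro u x hx x' hx'
    obtain ⟨h1, h2⟩ := hDG u x hx x' hx'
    have h2a := (abs_le.1 h2).1
    have h2b := (abs_le.1 h2).2
    have h1a := (abs_le.1 h1).1
    have h1b := (abs_le.1 h1).2
    have hm' := hm0 x hx u
    have hn := norm_nonneg (x' - x)
    have h2c := mul_le_mul_of_nonneg_left h2b hθ₀pos.le
    have h2d := mul_le_mul_of_nonneg_left h2a hθ₀pos.le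
    have h9 : 0 ≤ θ₀ * (K₁ * m x u * ‖x' - x‖) :=
      mul_nonneg hθ₀pos.le (mul_nonneg (mul_nonneg hK₁0.le hm') hn)
    constructor
    · rw [abs_le]
      simp only [hm_def, hL_def] at h1a h1b h2a h2b h2c h2d ⊢
      constructor
      · nlinarith [h2c, h2d]
      · nlinarith [h2c, h2d]
    · rw [abs_le]
      constructor
      · rw [hL_def]
        nlinarith [h9]
      · rw [hL_def]
        nlinarith [h9]
  -- the sup function
  set 𝒮 : X → {E : Submodule ℝ r.H // Module.finrank ℝ E = k} → ℝ :=
    fun x E => ⨆ u : {u : r.H // u ∈ E.1 ∧ u ≠ 0}, r.R x u.1 with hS_def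
  have heig : ∀ x : X, r.eig k x = ⨅ E, 𝒮 x E := fun x => rfl
  have hEfin : ∀ E : {E : Submodule ℝ r.H // Module.finrank ℝ E = k},
      FiniteDimensional ℝ E.1 := by
    intro E
    exact FiniteDimensional.of_finrank_pos (by rw [E.2]; omega)
  have hEne : ∀ E : {E : Submodule ℝ r.H // Module.finrank ℝ E = k},
      Nonempty {u : r.H // u ∈ E.1 ∧ u ≠ 0} := by
    intro E
    haveI := hEfin E
    haveI : Nontrivial E.1 := Module.nontrivial_of_finrank_pos (R := ℝ) (by rw [E.2]; omega)
    obtain ⟨v, hv⟩ := exists_ne (0 : E.1)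
    exact ⟨⟨↑v, v.2, fun h => hv (ZeroMemClass.coe_eq_zero.mp h)⟩⟩
  have hBdd : ∀ x ∈ s, ∀ E : {E : Submodule ℝ r.H // Module.finrank ℝ E = k},
      BddAbove (Set.range fun u : {u : r.H // u ∈ E.1 ∧ u ≠ 0} => r.R x u.1) := by
    intro x hx E
    haveI := hEfin E
    obtain ⟨CE, hCE⟩ := exists_ratio_bound_of_posDef
      ((r.B x).compl₁₂ (r.H.subtype.comp E.1.subtype) (r.H.subtype.comp E.1.subtype))
      ((r.Γ x).compl₁₂ E.1.subtype E.1.subtype)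
      (fun v w => hBsymm x _ _)
      (fun v hv => by
        have hvne : (↑(↑v : r.H) : Y) ≠ 0 := by
          intro hc
          exact hv (ZeroMemClass.coe_eq_zero.mp (ZeroMemClass.coe_eq_zero.mp hc))
        exact hpos x (hsΩ x hx) _ hvne)
    refine ⟨CE, ?_⟩
    rintro y ⟨⟨u, hu, hune⟩, rfl⟩
    have h1 : r.G x u ≤ CE * r.Q x ↑u := hCE ⟨u, hu⟩
    have h2 : 0 < r.Q x (↑u : Y) := hQpos x hx u hune
    show r.R x u ≤ CE
    rw [RayleighData.R, div_le_iff₀ h2]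
    linarith [h1]
  have hRlow : ∀ x ∈ s, ∀ u : r.H, u ≠ 0 → 1 - θ₀ ≤ r.R x u := by
    intro x hx u hu
    have h2 : 0 < r.Q x (↑u : Y) := hQpos x hx u hu
    have h3 := hmQ x hx u
    simp only [hm_def] at h3
    rw [RayleighData.R, le_div_iff₀ h2]
    nlinarith
  have hSlow : ∀ x ∈ s, ∀ E, 1 - θ₀ ≤ 𝒮 x E := by
    intro x hx E
    obtain ⟨u⟩ := hEne E
    exact le_trans (hRlow x hx u.1 u.2.2) (le_ciSup (hBdd x hx E) u)
  have heig_le : ∀ x ∈ s, ∀ E, r.eig k x ≤ 𝒮 x E := by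
    intro x hx E
    rw [heig]
    refine ciInf_le ⟨1 - θ₀, ?_⟩ E
    rintro y ⟨E', rfl⟩
    exact hSlow x hx E'
  haveI hEnonempty : Nonempty {E : Submodule ℝ r.H // Module.finrank ℝ E = k} := by
    have hrank : (k : Cardinal) ≤ Module.rank ℝ r.H := by
      by_contra h
      push_neg at h
      exact hinf (Module.rank_lt_aleph0_iff.1 (h.trans (Cardinal.nat_lt_aleph0 k)))
    obtain ⟨t, ht_card, ht_li⟩ := le_rank_iff_exists_linearIndependent_finset.1 hrank
    exact ⟨⟨Submodule.span ℝ ↑t, by rw [finrank_span_finset_eq_card ht_li, ht_card]⟩⟩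
  have heig_low : ∀ x ∈ s, 1 - θ₀ ≤ r.eig k x := by
    intro x hx
    rw [heig]
    exact le_ciInf (fun E => hSlow x hx E)
  -- the transfer estimate
  have htrans : ∀ x ∈ s, ∀ x' ∈ s, ∀ Λ : ℝ, 1 ≤ Λ →
      L * ‖x' - x‖ * Λ ≤ 1/2 →
      ∀ E : {E : Submodule ℝ r.H // Module.finrank ℝ E = k},
      (∀ u : r.H, u ∈ E.1 → u ≠ 0 → r.R x u + θ₀ ≤ Λ) →
      r.eig k x' ≤ Λ - θ₀ + 2 * (L * ‖x' - x‖) * Λ * (1 + Λ) := by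
    intro x hx x' hx' Λ hΛ1 hsmall E hptw
    set ε : ℝ := L * ‖x' - x‖ with hε_def
    clear_value ε
    have hε0 : 0 ≤ ε := by rw [hε_def]; exact mul_nonneg hL0.le (norm_nonneg _)
    refine le_trans (heig_le x' hx' E) ?_
    haveI := hEne E
    rw [hS_def]
    refine ciSup_le ?_
    rintro ⟨u, hu, hune⟩
    have hq : 0 < r.Q x (↑u : Y) := hQpos x hx u hune
    have hq' : 0 < r.Q x' (↑u : Y) := hQpos x' hx' u hune
    have hqm : r.Q x ↑u ≤ m x u := hmQ x hx u
    obtain ⟨hMb, hQb⟩ := hDm u x hx x' hx'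
    have hRxu : m x u ≤ Λ * r.Q x ↑u := by
      have h3 := hptw u hu hune
      rw [RayleighData.R] at h3
      have h4 : r.G x u / r.Q x ↑u ≤ Λ - θ₀ := by linarith
      have h5 := (div_le_iff₀ hq).1 h4
      simp only [hm_def]
      nlinarith
    have hq'low : (1 - ε*Λ) * r.Q x ↑u ≤ r.Q x' ↑u := by
      have h1 := (abs_le.1 hQb).1
      nlinarith
    have hm'up : m x' u ≤ (1 + ε) * m x u := by
      have h1 := (abs_le.1 hMb).2
      nlinarith
    have hm'0 : 0 ≤ m x' u := hm0 x' hx' u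
    have hgoal : m x' u ≤ (Λ + 2*ε*Λ*(1+Λ)) * r.Q x' ↑u := by
      have hx1 : 0 ≤ ε*Λ := mul_nonneg hε0 (by linarith)
      have hx2 : 0 ≤ ε*Λ*(1+Λ)*(1-2*(ε*Λ)) :=
        mul_nonneg (mul_nonneg hx1 (by linarith : (0:ℝ) ≤ 1+Λ))
          (by linarith [hsmall] : (0:ℝ) ≤ 1-2*(ε*Λ))
      have hcoef : (1+ε)*Λ ≤ (Λ + 2*ε*Λ*(1+Λ)) * (1 - ε*Λ) := by nlinarith [hx2]
      have hcoef0 : (0:ℝ) ≤ Λ + 2*ε*Λ*(1+Λ) := by nlinarith [hx1]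
      calc m x' u ≤ (1+ε) * m x u := hm'up
      _ ≤ (1+ε) * (Λ * r.Q x ↑u) :=
          mul_le_mul_of_nonneg_left hRxu (by linarith : (0:ℝ) ≤ 1+ε)
      _ = ((1+ε)*Λ) * r.Q x ↑u := by ring
      _ ≤ ((Λ + 2*ε*Λ*(1+Λ)) * (1 - ε*Λ)) * r.Q x ↑u :=
          mul_le_mul_of_nonneg_right hcoef hq.le
      _ = (Λ + 2*ε*Λ*(1+Λ)) * ((1 - ε*Λ) * r.Q x ↑u) := by ring
      _ ≤ (Λ + 2*ε*Λ*(1+Λ)) * r.Q x' ↑u := mul_le_mul_of_nonneg_left hq'low hcoef0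
    show r.R x' u ≤ Λ - θ₀ + 2 * ε * Λ * (1 + Λ)
    rw [RayleighData.R, div_le_iff₀ hq']
    simp only [hm_def] at hgoal
    nlinarith
  -- fixed near-optimal subspace at x₀
  obtain ⟨E₀, hE₀⟩ : ∃ E, 𝒮 x₀ E < r.eig k x₀ + 1 := by
    refine exists_lt_of_ciInf_lt ?_
    rw [← heig]
    linarith
  set Λ₁ : ℝ := r.eig k x₀ + θ₀ + 1 with hΛ₁_def
  clear_value Λ₁
  have hΛ₁2 : 2 ≤ Λ₁ := by
    have := heig_low x₀ hx₀s
    rw [hΛ₁_def]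
    linarith
  have hptw₀ : ∀ u : r.H, u ∈ E₀.1 → u ≠ 0 → r.R x₀ u + θ₀ ≤ Λ₁ := by
    intro u hu hune
    have h1 := le_ciSup (hBdd x₀ hx₀s E₀) (⟨u, hu, hune⟩ : {u : r.H // u ∈ E₀.1 ∧ u ≠ 0})
    rw [hΛ₁_def]
    have h2 : r.R x₀ u < r.eig k x₀ + 1 := lt_of_le_of_lt h1 hE₀
    linarith
  set Λm : ℝ := 3 * Λ₁ + 1 with hΛm_def
  clear_value Λm
  have hΛm7 : 7 ≤ Λm := by rw [hΛm_def]; linarith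
  have hΛm0 : (0:ℝ) < Λm := by linarith
  have hW0 : (0:ℝ) < Λm + 1 := by linarith
  -- choice of radius
  have h4L : 0 < 4 * L * (Λm + 1)^2 := mul_pos (by linarith) (pow_pos hW0 2)
  set ρ : ℝ := min ρ₁ ((4 * L * (Λm + 1)^2)⁻¹) with hρ_def
  clear_value ρ
  have hρ0 : 0 < ρ := by rw [hρ_def]; exact lt_min hρ₁ (inv_pos.2 h4L)
  set t : Set X := Metric.ball x₀ ρ with ht_def
  have hts : t ⊆ s := Metric.ball_subset_ball (by rw [hρ_def]; exact min_le_left _ _)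
  have hx₀t : x₀ ∈ t := Metric.mem_ball_self hρ0
  have hεsmall : ∀ x ∈ t, ∀ x' ∈ t, L * ‖x' - x‖ ≤ (2 * (Λm+1)^2)⁻¹ := by
    intro x hx x' hx'
    have h1 : dist x' x₀ < ρ := Metric.mem_ball.1 hx'
    have h2 : dist x x₀ < ρ := Metric.mem_ball.1 hx
    have hd : ‖x' - x‖ ≤ 2 * ρ := by
      rw [← dist_eq_norm]
      calc dist x' x ≤ dist x' x₀ + dist x₀ x := dist_triangle _ _ _
      _ = dist x' x₀ + dist x x₀ := by rw [dist_comm x₀ x]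
      _ ≤ 2 * ρ := by linarith
    have hρle : ρ ≤ (4 * L * (Λm+1)^2)⁻¹ := by rw [hρ_def]; exact min_le_right _ _
    have h5 : L * (2 * ((4 * L * (Λm+1)^2)⁻¹)) = (2*(Λm+1)^2)⁻¹ := by
      field_simp
      ring
    calc L * ‖x' - x‖ ≤ L * (2 * ρ) := by nlinarith
    _ ≤ L * (2 * ((4 * L * (Λm+1)^2)⁻¹)) := by nlinarith
    _ = (2*(Λm+1)^2)⁻¹ := h5
  have hkey : (2*(Λm+1)^2)⁻¹ * (Λm+1) ≤ 1/2 := by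
    have h1 : (2*(Λm+1)^2)⁻¹ * (Λm+1) = (2*(Λm+1))⁻¹ := by
      field_simp
    rw [h1]
    have h2 : (2:ℝ) ≤ 2*(Λm+1) := by linarith
    have := inv_anti₀ (by norm_num : (0:ℝ) < 2) h2
    linarith
  have hεprod : ∀ x ∈ t, ∀ x' ∈ t, ∀ a : ℝ, 0 ≤ a → a ≤ Λm + 1 →
      L * ‖x' - x‖ * a ≤ 1/2 := by
    intro x hx x' hx' a ha0 haΛ
    have h1 := hεsmall x hx x' hx'
    calc L * ‖x' - x‖ * a ≤ (2*(Λm+1)^2)⁻¹ * a :=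
        mul_le_mul_of_nonneg_right h1 ha0
    _ ≤ (2*(Λm+1)^2)⁻¹ * (Λm+1) := by
        refine mul_le_mul_of_nonneg_left haΛ (by positivity)
    _ ≤ 1/2 := hkey
  -- uniform local upper bound for the eigenvalue
  have hbound : ∀ x ∈ t, r.eig k x + θ₀ ≤ 3 * Λ₁ := by
    intro x hx
    have hsm : L * ‖x - x₀‖ * Λ₁ ≤ 1/2 :=
      hεprod x₀ hx₀t x hx Λ₁ (by linarith) (by rw [hΛm_def]; linarith)
    have h := htrans x₀ hx₀s x (hts hx) Λ₁ (by linarith) hsm E₀ hptw₀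
    have hε1 : L * ‖x - x₀‖ * (1 + Λ₁) ≤ 1/2 :=
      hεprod x₀ hx₀t x hx (1 + Λ₁) (by linarith) (by rw [hΛm_def]; linarith)
    have h10 : 0 ≤ 2*Λ₁ := by linarith
    have h11 : 2 * (L * ‖x - x₀‖) * Λ₁ * (1 + Λ₁) ≤ Λ₁ := by
      nlinarith [mul_le_mul_of_nonneg_left hε1 h10]
    linarith [h, h11]
  -- the one-sided Lipschitz estimate
  set Kc : ℝ := 2 * L * Λm * (1 + Λm) with hKc_def
  clear_value Kc
  have hKc0 : 0 ≤ Kc := by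
    rw [hKc_def]
    have := mul_pos (mul_pos (mul_pos two_pos hL0) hΛm0) (by linarith : (0:ℝ) < 1+Λm)
    linarith
  have hone : ∀ x ∈ t, ∀ x' ∈ t,
      r.eig k x' ≤ r.eig k x + Kc * ‖x' - x‖ := by
    intro x hx x' hx'
    refine le_of_forall_pos_le_add ?_
    intro δ' hδ'
    set δ : ℝ := min δ' 1 with hδ_def
    clear_value δ
    have hδ0 : 0 < δ := by rw [hδ_def]; exact lt_min hδ' one_pos
    have hδ1 : δ ≤ 1 := by rw [hδ_def]; exact min_le_right _ _
    have hδδ' : δ ≤ δ' := by rw [hδ_def]; exact min_le_left _ _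
    obtain ⟨E, hEopt⟩ : ∃ E, 𝒮 x E < r.eig k x + δ := by
      refine exists_lt_of_ciInf_lt ?_
      rw [← heig]
      linarith
    set Λ : ℝ := r.eig k x + θ₀ + δ with hΛ_def
    clear_value Λ
    have hΛ1 : 1 ≤ Λ := by
      have := heig_low x (hts hx)
      rw [hΛ_def]
      linarith
    have hΛle : Λ ≤ Λm := by
      have := hbound x hx
      rw [hΛ_def, hΛm_def]
      linarith
    have hptw : ∀ u : r.H, u ∈ E.1 → u ≠ 0 → r.R x u + θ₀ ≤ Λ := by
      intro u hu hune
      have h1 := le_ciSup (hBdd x (hts hx) E) (⟨u, hu, hune⟩ : {u : r.H // u ∈ E.1 ∧ u ≠ 0})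
      have h2 : r.R x u < r.eig k x + δ := lt_of_le_of_lt h1 hEopt
      rw [hΛ_def]
      linarith
    have hsm : L * ‖x' - x‖ * Λ ≤ 1/2 :=
      hεprod x hx x' hx' Λ (by linarith) (by linarith)
    have h := htrans x (hts hx) x' (hts hx') Λ hΛ1 hsm E hptw
    have hLn : 0 ≤ L * ‖x' - x‖ := mul_nonneg hL0.le (norm_nonneg (x' - x))
    have hp : Λ*(1+Λ) ≤ Λm*(1+Λm) := by
      nlinarith [mul_nonneg (sub_nonneg.2 hΛle) (by linarith : (0:ℝ) ≤ Λm+Λ+1)]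
    have hmono : 2 * (L * ‖x' - x‖) * Λ * (1 + Λ) ≤ Kc * ‖x' - x‖ := by
      rw [hKc_def]
      nlinarith [mul_le_mul_of_nonneg_left hp hLn]
    linarith [h, hmono]
  -- conclusion
  refine ⟨Real.toNNReal Kc, t, ?_, ?_⟩
  · rw [ht_def]
    exact Metric.ball_mem_nhds x₀ hρ0
  · refine LipschitzOnWith.of_dist_le_mul ?_
    intro x hx y hy
    have hx' : x ∈ t := hx.1
    have hy' : y ∈ t := hy.1
    have h1 := hone x hx' y hy'
    have h2 := hone y hy' x hx'
    rw [Real.dist_eq, dist_eq_norm, Real.coe_toNNReal Kc hKc0, abs_sub_le_iff]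
    constructor
    · linarith [h2]
    · rw [norm_sub_rev]
      linarith [h1]
end
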